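/- arXiv:cs/0603064 — 13 statements merged into one kernel-verified Lean document; each statement's English description precedes it below -/
import Mathlib

section
/- For a finite set X and any guessing function G: X → {1,...,|X|} that is a bijection, and any x in X, the number of guesses G(x) under the order induced by a PMF Q (guessing in decreasing order of Q-probabilities, ties broken arbitrarily) satisfies G_Q(x) ≤ Σ_{a∈X} (Q(a)/Q(x))^{1/(1+ρ)} for every ρ > 0, provided Q(x) > 0. -/
open Real Finset

/-- A probability mass function on a finite set, viewed as a real-valued function. -/
def IsPMF {X : Type*} [Fintype X] (p : X → ℝ) : Prop :=
  (∀ x, 0 ≤ p x) ∧ ∑ x, p x = 1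

/-- For any guessing list `G` induced by a PMF `Q` (guessing in decreasing
order of `Q`-probabilities), the number of guesses `G(x)` (i.e. `(G x : ℕ) + 1`) satisfies
`G(x) ≤ ∑ a, (Q a / Q x) ^ (1/(1+ρ))` for every `ρ > 0` and every `x` with `Q x > 0`. -/
theorem guessing_under_mismatch_upper_bound
    {X : Type*} [Fintype X] [Nonempty X]
    (ρ : ℝ) (hρ : 0 < ρ)
    (Q : X → ℝ) (hQ : IsPMF Q) (hQpos : ∀ a, 0 < Q a)
    (G : X ≃ Fin (Fintype.card X))
    (hG : ∀ x x', Q x > Q x' → (G x : ℕ) < (G x' : ℕ))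
    (x : X) :
    ((G x : ℕ) + 1 : ℝ) ≤ ∑ a, (Q a / Q x) ^ (1 / (1 + ρ)) := by
  classical
  set e : ℝ := 1 / (1 + ρ) with he
  have he0 : 0 ≤ e := by positivity
  set S : Finset X := univ.filter (fun a => (G a : ℕ) ≤ (G x : ℕ)) with hS
  have hcard : S.card = (G x : ℕ) + 1 := by
    have : S = univ.filter (fun a => G a ∈ univ.filter (fun i : Fin (Fintype.card X) => (i : ℕ) ≤ (G x : ℕ))) := by
      simp [hS]
    rw [this, ← Finset.card_image_of_injective _ G.injective]
    have himg : (univ.filter (fun a => G a ∈ univ.filter (fun i : Fin (Fintype.card X) => (i : ℕ) ≤ (G x : ℕ)))).image G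
        = univ.filter (fun i : Fin (Fintype.card X) => (i : ℕ) ≤ (G x : ℕ)) := by
      ext i
      simp only [Finset.mem_image, Finset.mem_filter, Finset.mem_univ, true_and]
      constructor
      · rintro ⟨a, ha, rfl⟩; exact ha
      · intro hi; exact ⟨G.symm i, by simpa using hi, by simp⟩
    rw [himg]
    have hIic : univ.filter (fun i : Fin (Fintype.card X) => (i : ℕ) ≤ (G x : ℕ)) = Finset.Iic (G x) := by
      ext i
      simp only [Finset.mem_filter, Finset.mem_univ, true_and, Finset.mem_Iic, Fin.le_def]
    rw [hIic, Fin.card_Iic]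
  have hterm : ∀ a ∈ S, (1 : ℝ) ≤ (Q a / Q x) ^ e := by
    intro a ha
    have hle : Q x ≤ Q a := by
      by_contra h
      push_neg at h
      have := hG x a h
      simp only [hS, Finset.mem_filter] at ha
      omega
    have h1 : (1 : ℝ) ≤ Q a / Q x := (one_le_div (hQpos x)).2 hle
    exact Real.one_le_rpow h1 he0
  have h1 : ((G x : ℕ) + 1 : ℝ) ≤ ∑ a ∈ S, (Q a / Q x) ^ e := by
    calc ((G x : ℕ) + 1 : ℝ) = (S.card : ℝ) := by rw [hcard]; push_cast; ring
    _ = ∑ a ∈ S, (1 : ℝ) := by simp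
    _ ≤ ∑ a ∈ S, (Q a / Q x) ^ e := Finset.sum_le_sum hterm
  refine h1.trans (Finset.sum_le_sum_of_subset_of_nonneg (Finset.subset_univ S) ?_)
  intro a _ _
  exact Real.rpow_nonneg (div_nonneg (hQpos a).le (hQpos x).le) _
end

section
/- For any PMF P on a finite set X and any ρ > 0, if the guessing list G_P guesses in decreasing order of P-probabilities, then (1/ρ) log E_P[G_P(X)^ρ] ≤ H_{1/(1+ρ)}(P), where H_α(P) = (1/(1-α)) log Σ_x P(x)^α is the Rényi entropy of order α. -/
open Real Finset

/-- The Rényi entropy of order `α` of a PMF `P`. -/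
noncomputable def renyiH {X : Type*} [Fintype X] (α : ℝ) (P : X → ℝ) : ℝ :=
  (1 / (1 - α)) * Real.log (∑ x, P x ^ α)

/-- matched guessing: if `G_P` guesses in decreasing order of
`P`-probabilities then `(1/ρ) log E_P[G_P(X)^ρ] ≤ H_{1/(1+ρ)}(P)`. -/
theorem matched_guessing_renyi_upper_bound
    {X : Type*} [Fintype X] [Nonempty X]
    (ρ : ℝ) (hρ : 0 < ρ)
    (P : X → ℝ) (hP : IsPMF P)
    (GP : X ≃ Fin (Fintype.card X))
    (hGP : ∀ x x', P x > P x' → (GP x : ℕ) < (GP x' : ℕ)) :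
    (1 / ρ) * Real.log (∑ x, P x * ((GP x : ℕ) + 1 : ℝ) ^ ρ)
      ≤ renyiH (1 / (1 + ρ)) P := by
  obtain ⟨hP0, hP1⟩ := hP
  set α : ℝ := 1 / (1 + ρ) with hα
  have h1ρ : (0:ℝ) < 1 + ρ := by linarith
  have hα0 : 0 < α := by positivity
  have hα1 : α ≤ 1 := by
    rw [hα, div_le_one h1ρ]; linarith
  have hαρ : α * ρ = 1 - α := by
    rw [hα]; field_simp; ring
  set S : ℝ := ∑ x, P x ^ α with hS
  have hPle1 : ∀ x, P x ≤ 1 := by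
    intro x
    calc P x ≤ ∑ y, P y := Finset.single_le_sum (fun y _ => hP0 y) (mem_univ x)
    _ = 1 := hP1
  -- S ≥ 1
  have hS1 : 1 ≤ S := by
    rw [← hP1]
    apply Finset.sum_le_sum
    intro x _
    rcases eq_or_lt_of_le (hP0 x) with h | h
    · rw [← h, Real.zero_rpow (ne_of_gt hα0)]
    · calc P x = P x ^ (1:ℝ) := (Real.rpow_one _).symm
      _ ≤ P x ^ α := Real.rpow_le_rpow_of_exponent_ge h (hPle1 x) hα1
  have hS0 : 0 < S := lt_of_lt_of_le one_pos hS1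
  -- counting lemma
  have hcard : ∀ x : X, ((Finset.univ.filter fun y => (GP y : ℕ) ≤ (GP x : ℕ)).card : ℝ)
      = ((GP x : ℕ) + 1 : ℝ) := by
    intro x
    have : (Finset.univ.filter fun y => (GP y : ℕ) ≤ (GP x : ℕ)).card
        = (Finset.Iic (GP x)).card := by
      apply Finset.card_nbij' (fun y => GP y) (fun i => GP.symm i)
      · intro y hy
        simp only [Finset.mem_coe, mem_filter, mem_univ, true_and] at hy
        exact Finset.mem_Iic.mpr hy
      · intro i hi
        simp only [Finset.mem_coe, Finset.mem_Iic, Fin.le_def] at hi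
        simp only [Finset.mem_coe, mem_filter, mem_univ, true_and, Equiv.apply_symm_apply]
        exact hi
      · intro y _; simp
      · intro i _; simp
    rw [this, Fin.card_Iic]
    push_cast; ring
  -- pointwise bound
  have hpt : ∀ x : X, P x * ((GP x : ℕ) + 1 : ℝ) ^ ρ ≤ P x ^ α * S ^ ρ := by
    intro x
    rcases eq_or_lt_of_le (hP0 x) with h | h
    · rw [← h, Real.zero_rpow (ne_of_gt hα0), zero_mul, zero_mul]
    · have hPxα : 0 < P x ^ α := Real.rpow_pos_of_pos h α
      have hkey : ((GP x : ℕ) + 1 : ℝ) ≤ S / P x ^ α := by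
        rw [← hcard x]
        have step1 : ((Finset.univ.filter fun y => (GP y : ℕ) ≤ (GP x : ℕ)).card : ℝ)
            ≤ ∑ y ∈ Finset.univ.filter (fun y => (GP y : ℕ) ≤ (GP x : ℕ)), P y ^ α / P x ^ α := by
          rw [Finset.card_eq_sum_ones]
          push_cast
          apply Finset.sum_le_sum
          intro y hy
          simp only [mem_filter, mem_univ, true_and] at hy
          have hyx : P x ≤ P y := by
            by_contra hc
            push_neg at hc
            exact absurd hy (not_le.mpr (hGP x y hc))
          rw [le_div_iff₀ hPxα, one_mul]
          exact Real.rpow_le_rpow (le_of_lt h) hyx (le_of_lt hα0)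
        refine step1.trans ?_
        rw [hS, ← Finset.sum_div]
        apply div_le_div_of_nonneg_right _ hPxα.le
        apply Finset.sum_le_sum_of_subset_of_nonneg (Finset.filter_subset _ _)
        intro y _ _
        exact Real.rpow_nonneg (hP0 y) α
      have hbase : (0:ℝ) ≤ ((GP x : ℕ) + 1 : ℝ) := by positivity
      have h2 : ((GP x : ℕ) + 1 : ℝ) ^ ρ ≤ (S / P x ^ α) ^ ρ :=
        Real.rpow_le_rpow hbase hkey (le_of_lt hρ)
      have e1 : (S / P x ^ α) ^ ρ = S ^ ρ / P x ^ (α * ρ) := by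
        rw [Real.div_rpow (le_of_lt hS0) (le_of_lt hPxα), ← Real.rpow_mul (hP0 x)]
      have h3 : P x ^ (1 - α) * P x ^ α = P x := by
        rw [← Real.rpow_add h]; norm_num
      have hPx1α : 0 < P x ^ (1 - α) := Real.rpow_pos_of_pos h _
      calc P x * ((GP x : ℕ) + 1 : ℝ) ^ ρ ≤ P x * (S / P x ^ α) ^ ρ :=
            mul_le_mul_of_nonneg_left h2 (hP0 x)
        _ = P x * (S ^ ρ / P x ^ (1 - α)) := by rw [e1, hαρ]
        _ = (P x ^ (1 - α) * P x ^ α) * (S ^ ρ / P x ^ (1 - α)) := by rw [h3]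
        _ = P x ^ α * S ^ ρ := by field_simp
  -- sum the bound
  have hsum : (∑ x, P x * ((GP x : ℕ) + 1 : ℝ) ^ ρ) ≤ S ^ (1 + ρ) := by
    calc (∑ x, P x * ((GP x : ℕ) + 1 : ℝ) ^ ρ) ≤ ∑ x, P x ^ α * S ^ ρ :=
          Finset.sum_le_sum (fun x _ => hpt x)
      _ = S * S ^ ρ := by rw [← Finset.sum_mul]
      _ = S ^ (1 + ρ) := by
          rw [Real.rpow_add hS0, Real.rpow_one]
  have hE1 : (1:ℝ) ≤ ∑ x, P x * ((GP x : ℕ) + 1 : ℝ) ^ ρ := by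
    calc (1:ℝ) = ∑ x, P x := hP1.symm
      _ ≤ ∑ x, P x * ((GP x : ℕ) + 1 : ℝ) ^ ρ := by
          apply Finset.sum_le_sum
          intro x _
          have hb : (1:ℝ) ≤ ((GP x : ℕ) + 1 : ℝ) := by
            have : (0:ℝ) ≤ ((GP x : ℕ) : ℝ) := Nat.cast_nonneg _
            linarith
          have ht : (1:ℝ) ≤ ((GP x : ℕ) + 1 : ℝ) ^ ρ := Real.one_le_rpow hb (le_of_lt hρ)
          exact le_mul_of_one_le_right (hP0 x) ht
  have hlog : Real.log (∑ x, P x * ((GP x : ℕ) + 1 : ℝ) ^ ρ) ≤ (1 + ρ) * Real.log S := by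
    rw [← Real.log_rpow hS0]
    exact Real.log_le_log (by linarith) hsum
  have hrhs : renyiH α P = (1 / (1 - α)) * Real.log S := by rw [renyiH]
  rw [hrhs]
  have hcoef : (1 / ρ) * (1 + ρ) = 1 / (1 - α) := by
    rw [hα]
    field_simp
    rw [add_sub_cancel_left, div_self hρ.ne']
  calc (1 / ρ) * Real.log (∑ x, P x * ((GP x : ℕ) + 1 : ℝ) ^ ρ)
      ≤ (1 / ρ) * ((1 + ρ) * Real.log S) :=
        mul_le_mul_of_nonneg_left hlog (by positivity)
    _ = (1 / (1 - α)) * Real.log S := by rw [← mul_assoc, hcoef]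
end

section
/- For any PMF P on a finite set X, any bijective guessing list G, and any ρ > 0, E_P[G(X)^ρ] ≥ (1 + ln|X|)^{-ρ} · Σ_x P(x) [Σ_a (Q_G(a)/Q_G(x))^{1/(1+ρ)}]^ρ, where Q_G(x) = c^{-1} G(x)^{-(1+ρ)} with c = Σ_{i=1}^{|X|} i^{-(1+ρ)}. -/
open Real Finset

/-- converse bound: for any PMF `P`, bijective guessing list `G`
and `ρ > 0`, with `Q_G(x) = G(x)^{-(1+ρ)}/c`, `c = ∑_{i=1}^{|X|} i^{-(1+ρ)}`,
we have `E_P[G(X)^ρ] ≥ (1 + ln|X|)^{-ρ} ∑_x P x [∑_a (Q_G a / Q_G x)^{1/(1+ρ)}]^ρ`. -/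
theorem guessing_lower_bound
    {X : Type*} [Fintype X] [Nonempty X]
    (ρ : ℝ) (hρ : 0 < ρ)
    (P : X → ℝ) (hP : IsPMF P)
    (G : X ≃ Fin (Fintype.card X))
    (c : ℝ) (hc : c = ∑ i ∈ Finset.range (Fintype.card X), ((i : ℝ) + 1) ^ (-(1 + ρ)))
    (QG : X → ℝ) (hQG : ∀ x, QG x = ((G x : ℕ) + 1 : ℝ) ^ (-(1 + ρ)) / c) :
    ∑ x, P x * ((G x : ℕ) + 1 : ℝ) ^ ρ
      ≥ (1 + Real.log (Fintype.card X)) ^ (-ρ)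
          * ∑ x, P x * (∑ a, (QG a / QG x) ^ (1 / (1 + ρ))) ^ ρ := by
  have hn1 : 1 ≤ Fintype.card X := Fintype.card_pos
  have hc0 : 0 < c := by
    rw [hc]
    apply Finset.sum_pos (fun i _ => by positivity)
    exact Finset.nonempty_range_iff.mpr (by omega)
  have h1ρ : (0:ℝ) < 1 + ρ := by linarith
  have hg : ∀ x : X, (0:ℝ) < ((G x : ℕ) + 1 : ℝ) := fun x => by positivity
  set H : ℝ := ∑ a : X, (((G a : ℕ) + 1 : ℝ))⁻¹ with hH
  have hHval : H = (harmonic (Fintype.card X) : ℝ) := by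
    rw [hH, Equiv.sum_comp G (fun j : Fin (Fintype.card X) => (((j : ℕ) + 1 : ℝ))⁻¹),
      Fin.sum_univ_eq_sum_range (fun i => (((i:ℕ) + 1 : ℝ))⁻¹), harmonic, Rat.cast_sum]
    push_cast
    rfl
  have hHpos : 0 < H := by
    rw [hH]
    exact Finset.sum_pos (fun a _ => by positivity) Finset.univ_nonempty
  have hlog : (0:ℝ) < 1 + Real.log (Fintype.card X) := by
    have : (0:ℝ) ≤ Real.log (Fintype.card X) := Real.log_nonneg (by exact_mod_cast hn1)
    linarith
  have hHle : H ≤ 1 + Real.log (Fintype.card X) := by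
    rw [hHval]; exact harmonic_le_one_add_log (Fintype.card X)
  have hinner : ∀ x : X, (∑ a, (QG a / QG x) ^ (1 / (1 + ρ))) = ((G x : ℕ) + 1 : ℝ) * H := by
    intro x
    have key : ∀ a : X, (QG a / QG x) ^ (1 / (1 + ρ))
        = ((G x : ℕ) + 1 : ℝ) * (((G a : ℕ) + 1 : ℝ))⁻¹ := by
      intro a
      rw [hQG, hQG, div_div_div_comm, div_self (ne_of_gt hc0), div_one,
        ← Real.div_rpow (le_of_lt (hg a)) (le_of_lt (hg x)),
        ← Real.rpow_mul (by positivity)]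
      have : -(1 + ρ) * (1 / (1 + ρ)) = -1 := by field_simp
      rw [this, Real.rpow_neg_one, inv_div, div_eq_mul_inv]
    rw [Finset.sum_congr rfl (fun a _ => key a), ← Finset.mul_sum]
  have hsum : ∑ x, P x * (∑ a, (QG a / QG x) ^ (1 / (1 + ρ))) ^ ρ
      = H ^ ρ * ∑ x, P x * ((G x : ℕ) + 1 : ℝ) ^ ρ := by
    rw [Finset.mul_sum]
    refine Finset.sum_congr rfl (fun x _ => ?_)
    rw [hinner x, Real.mul_rpow (le_of_lt (hg x)) (le_of_lt hHpos)]
    ring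
  rw [hsum, ← mul_assoc]
  have hfac : (1 + Real.log (Fintype.card X)) ^ (-ρ) * H ^ ρ ≤ 1 := by
    rw [Real.rpow_neg (le_of_lt hlog)]
    rw [inv_mul_le_iff₀ (by positivity), mul_one]
    exact Real.rpow_le_rpow (le_of_lt hHpos) hHle (le_of_lt hρ)
  have hS : 0 ≤ ∑ x, P x * ((G x : ℕ) + 1 : ℝ) ^ ρ := by
    apply Finset.sum_nonneg (fun x _ => mul_nonneg (hP.1 x) (by positivity))
  calc (1 + Real.log (Fintype.card X)) ^ (-ρ) * H ^ ρ * ∑ x, P x * ((G x : ℕ) + 1 : ℝ) ^ ρ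
      ≤ 1 * ∑ x, P x * ((G x : ℕ) + 1 : ℝ) ^ ρ := by
        exact mul_le_mul_of_nonneg_right hfac hS
    _ = ∑ x, P x * ((G x : ℕ) + 1 : ℝ) ^ ρ := one_mul _
end

section
/- Let α = 1/(1+ρ) with ρ > 0, so 0 < α < 1. For PMFs P and Q on a finite set X with Q of full support, Σ_x P(x) [Σ_a (Q(a)/Q(x))^α]^{(1-α)/α} ≥ (Σ_x P(x)^α)^{1/α}, with equality if and only if P = Q. -/
open Real Finset

/-- analog of the Shannon inequality: for `α = 1/(1+ρ) ∈ (0,1)`,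
PMFs `P`, `Q` with `Q` of full support,
`∑_x P x [∑_a (Q a / Q x)^α]^{(1-α)/α} ≥ (∑_x P x ^ α)^{1/α}`,
with equality iff `P = Q`. -/
theorem shannon_inequality_analog
    {X : Type*} [Fintype X] [Nonempty X]
    (ρ : ℝ) (hρ : 0 < ρ) (α : ℝ) (hα : α = 1 / (1 + ρ))
    (P Q : X → ℝ) (hP : IsPMF P) (hQ : IsPMF Q) (hQpos : ∀ x, 0 < Q x) :
    (∑ x, P x * (∑ a, (Q a / Q x) ^ α) ^ ((1 - α) / α) ≥ (∑ x, P x ^ α) ^ (1 / α))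
    ∧ (∑ x, P x * (∑ a, (Q a / Q x) ^ α) ^ ((1 - α) / α) = (∑ x, P x ^ α) ^ (1 / α)
        ↔ P = Q) := by
  obtain ⟨hPnn, hPsum⟩ := hP
  obtain ⟨hQnn, hQsum⟩ := hQ
  have hρ1 : (1 : ℝ) < 1 + ρ := by linarith
  have hα0 : 0 < α := by rw [hα]; positivity
  have hα1 : α < 1 := by rw [hα, div_lt_one (by linarith)]; linarith
  set S := ∑ a, Q a ^ α with hS
  set A := ∑ x, P x * Q x ^ (α - 1) with hA
  set T := ∑ x, P x ^ α with hT
  have hSpos : 0 < S := Finset.sum_pos (fun a _ => rpow_pos_of_pos (hQpos a) α)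
    univ_nonempty
  have hAnn : 0 ≤ A := Finset.sum_nonneg fun x _ =>
    mul_nonneg (hPnn x) (rpow_nonneg (hQpos x).le _)
  have hTpos : 0 < T := by
    obtain ⟨x0, hx0⟩ : ∃ x0, P x0 ≠ 0 := by
      by_contra h
      push_neg at h
      rw [Finset.sum_eq_zero (fun x _ => h x)] at hPsum
      norm_num at hPsum
    have hPx0 : 0 < P x0 := (hPnn x0).lt_of_ne (Ne.symm hx0)
    exact Finset.sum_pos' (fun x _ => rpow_nonneg (hPnn x) _)
      ⟨x0, Finset.mem_univ x0, rpow_pos_of_pos hPx0 α⟩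
  -- Rewrite the LHS
  have hLHS : ∑ x, P x * (∑ a, (Q a / Q x) ^ α) ^ ((1 - α) / α)
      = S ^ ((1 - α) / α) * A := by
    rw [hA, Finset.mul_sum]
    refine Finset.sum_congr rfl fun x _ => ?_
    have h1 : ∑ a, (Q a / Q x) ^ α = S / Q x ^ α := by
      rw [hS, Finset.sum_div]
      exact Finset.sum_congr rfl fun a _ => Real.div_rpow (hQnn a) (hQnn x) α
    have hQxα : (0:ℝ) < Q x ^ α := rpow_pos_of_pos (hQpos x) α
    have hexp : α * ((1 - α) / α) = 1 - α := by field_simp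
    have h2 : Q x ^ (α - 1) = (Q x ^ (1 - α))⁻¹ := by
      rw [← Real.rpow_neg (hQpos x).le]; ring_nf
    rw [h1, Real.div_rpow hSpos.le hQxα.le, ← Real.rpow_mul (hQpos x).le, hexp, h2]
    ring
  -- Jensen setup
  set w : X → ℝ := fun x => Q x ^ α / S with hw
  set u : X → ℝ := fun x => P x / Q x with hu
  have hwpos : ∀ x ∈ Finset.univ, 0 < w x := fun x _ =>
    div_pos (rpow_pos_of_pos (hQpos x) α) hSpos
  have hw1 : ∑ x, w x = 1 := by
    rw [hw]; simp only []
    rw [← Finset.sum_div, ← hS, div_self hSpos.ne']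
  have hmem : ∀ x ∈ Finset.univ, u x ∈ Set.Ici (0:ℝ) := fun x _ =>
    div_nonneg (hPnn x) (hQpos x).le
  have hconc := Real.strictConcaveOn_rpow hα0 hα1
  have hsum1 : ∑ x, w x * (u x) ^ α = T / S := by
    rw [hT, Finset.sum_div]
    refine Finset.sum_congr rfl fun x _ => ?_
    rw [hw, hu]
    simp only []
    rw [Real.div_rpow (hPnn x) (hQnn x)]
    have hQxα : (0:ℝ) < Q x ^ α := rpow_pos_of_pos (hQpos x) α
    field_simp
  have hsum2 : ∑ x, w x * u x = A / S := by
    rw [hA, Finset.sum_div]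
    refine Finset.sum_congr rfl fun x _ => ?_
    rw [hw, hu]
    simp only []
    rw [show α - 1 = α - 1 from rfl, Real.rpow_sub (hQpos x), Real.rpow_one]
    field_simp
  -- Jensen's inequality
  have jensen : T / S ≤ (A / S) ^ α := by
    have := hconc.concaveOn.le_map_sum (fun x hx => (hwpos x hx).le) hw1 hmem
    simp only [smul_eq_mul] at this
    rw [hsum1, hsum2] at this
    exact this
  have hASnn : 0 ≤ A / S := div_nonneg hAnn hSpos.le
  have hTSnn : 0 ≤ T / S := div_nonneg hTpos.le hSpos.le
  -- strict-mono lift: T^(1/α) ≤ S^((1-α)/α) * A, equality iff jensen is equality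
  have hSpow : S ^ ((1 - α) / α) * A = S ^ (1 / α) * (A / S) := by
    rw [show (1 - α) / α = 1 / α - 1 by field_simp,
      Real.rpow_sub hSpos, Real.rpow_one]
    field_simp
  have hpowAS : ((A / S) ^ α) ^ (1 / α) = A / S := by
    rw [← Real.rpow_mul hASnn]
    rw [show α * (1 / α) = 1 by field_simp, Real.rpow_one]
  have hTS : (T / S) ^ (1 / α) = T ^ (1 / α) / S ^ (1 / α) :=
    Real.div_rpow hTpos.le hSpos.le (1 / α)
  have hS1α : (0:ℝ) < S ^ (1 / α) := rpow_pos_of_pos hSpos _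
  have main_le : T ^ (1 / α) ≤ S ^ ((1 - α) / α) * A := by
    have h := Real.rpow_le_rpow hTSnn jensen (by positivity : (0:ℝ) ≤ 1 / α)
    rw [hpowAS, hTS, div_le_iff₀ hS1α] at h
    rw [hSpow]; linarith [h]
  have main_eq_jensen : S ^ ((1 - α) / α) * A = T ^ (1 / α) ↔ T / S = (A / S) ^ α := by
    constructor
    · intro h
      by_contra hne
      have hlt : T / S < (A / S) ^ α := lt_of_le_of_ne jensen hne
      have := Real.rpow_lt_rpow hTSnn hlt (by positivity : (0:ℝ) < 1 / α)
      rw [hpowAS, hTS, div_lt_iff₀ hS1α] at this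
      rw [hSpow] at h
      nlinarith
    · intro h
      rw [hSpow, ← hpowAS, ← h, hTS]
      field_simp
  -- equality in Jensen iff P = Q
  have eq_iff : T / S = (A / S) ^ α ↔ P = Q := by
    constructor
    · intro h
      have heq : (∑ x, w x • u x) ^ α ≤ ∑ x, w x • (u x) ^ α := by
        simp only [smul_eq_mul]
        rw [hsum1, hsum2, h]
      have hall := hconc.eq_of_map_sum_eq hwpos hw1 hmem heq
      -- all u x equal; deduce P = Q
      obtain ⟨x0⟩ := ‹Nonempty X›
      have huc : ∀ x, u x = u x0 := fun x =>
        hall (Finset.mem_univ x) (Finset.mem_univ x0)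
      have hPx : ∀ x, P x = u x0 * Q x := fun x => by
        have h2 := huc x
        rw [hu] at h2
        simp only [] at h2
        rw [div_eq_div_iff (hQpos x).ne' (hQpos x0).ne'] at h2
        rw [hu]
        simp only []
        rw [div_mul_eq_mul_div, eq_div_iff (hQpos x0).ne']
        linarith
      have hc1 : u x0 = 1 := by
        have : (1:ℝ) = ∑ x, u x0 * Q x := by
          rw [← hPsum]
          exact Finset.sum_congr rfl fun x _ => hPx x
        rw [← Finset.mul_sum, hQsum, mul_one] at this
        exact this.symm
      funext x
      rw [hPx x, hc1, one_mul]
    · rintro rfl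
      have hTS' : T = S := by
        rw [hT, hS]
      have hAS : A = S := by
        rw [hA, hS]
        refine Finset.sum_congr rfl fun x _ => ?_
        rw [Real.rpow_sub (hQpos x), Real.rpow_one]
        have hx := (hQpos x).ne'
        field_simp
      rw [hTS', hAS, div_self hSpos.ne']
      rw [Real.one_rpow]
  constructor
  · rw [hLHS, ge_iff_le]; exact main_le
  · rw [hLHS, main_eq_jensen]; exact eq_iff
end

section
/- Let ρ > 0, α = 1/(1+ρ). For any PMF P on a finite set X, the minimum over bijective guessing lists G of (1/ρ) log E_P[G(X)^ρ] lies between H_α(P) − log(1 + ln|X|) and H_α(P). -/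
open Real Finset

/-- Arikan's guessing theorem: the minimum over bijective guessing
lists `G` of `(1/ρ) log E_P[G(X)^ρ]` lies between `H_α(P) - log(1 + ln|X|)` and
`H_α(P)`, where `α = 1/(1+ρ)`. -/
theorem arikan_guessing_theorem
    {X : Type*} [Fintype X] [Nonempty X]
    (ρ : ℝ) (hρ : 0 < ρ) (α : ℝ) (hα : α = 1 / (1 + ρ))
    (P : X → ℝ) (hP : IsPMF P) :
    renyiH α P - Real.log (1 + Real.log (Fintype.card X))
        ≤ (1 / ρ) * Real.log
            (⨅ G : X ≃ Fin (Fintype.card X), ∑ x, P x * ((G x : ℕ) + 1 : ℝ) ^ ρ)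
    ∧ (1 / ρ) * Real.log
          (⨅ G : X ≃ Fin (Fintype.card X), ∑ x, P x * ((G x : ℕ) + 1 : ℝ) ^ ρ)
        ≤ renyiH α P := by
  classical
  obtain ⟨hP0, hP1⟩ := hP
  have h1ρ : (0:ℝ) < 1 + ρ := by linarith
  have hα0 : 0 < α := by rw [hα]; positivity
  have hα1 : α < 1 := by
    rw [hα, div_lt_one h1ρ]; linarith
  have hαρ : α * (1 + ρ) = 1 := by rw [hα]; field_simp
  have h1mα : 1 - α = ρ / (1 + ρ) := by rw [hα]; field_simp; ring
  set M := Fintype.card X with hM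
  have hMpos : 0 < M := Fintype.card_pos
  have hlogM : 0 ≤ Real.log M := by
    apply Real.log_nonneg
    exact_mod_cast hMpos
  have hLM : (0:ℝ) < 1 + Real.log M := by linarith
  set S := ∑ x, P x ^ α with hSdef
  have hSpos : 0 < S := by
    have hex : ∃ x, 0 < P x := by
      by_contra h
      push_neg at h
      have : ∀ x, P x = 0 := fun x => le_antisymm (h x) (hP0 x)
      simp [this] at hP1
    obtain ⟨x₀, hx₀⟩ := hex
    refine Finset.sum_pos' (fun y _ => Real.rpow_nonneg (hP0 y) α) ⟨x₀, Finset.mem_univ _, ?_⟩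
    exact Real.rpow_pos_of_pos hx₀ α
  set E := fun G : X ≃ Fin M => ∑ x, P x * ((G x : ℕ) + 1 : ℝ) ^ ρ with hEdef
  have hE1 : ∀ G, 1 ≤ E G := by
    intro G
    have : ∀ x, P x * 1 ≤ P x * ((G x : ℕ) + 1 : ℝ) ^ ρ := by
      intro x
      apply mul_le_mul_of_nonneg_left _ (hP0 x)
      calc (1:ℝ) = 1 ^ ρ := (Real.one_rpow ρ).symm
        _ ≤ ((G x : ℕ) + 1 : ℝ) ^ ρ := by
            apply Real.rpow_le_rpow zero_le_one _ hρ.le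
            have : (0:ℝ) ≤ (G x : ℕ) := Nat.cast_nonneg _
            linarith
    calc (1:ℝ) = ∑ x, P x * 1 := by simp [hP1]
      _ ≤ E G := Finset.sum_le_sum (fun x _ => this x)
  have hne : Nonempty (X ≃ Fin M) := ⟨Fintype.equivFin X⟩
  have hbdd : BddBelow (Set.range E) := (Set.finite_range E).bddBelow
  have hinf1 : 1 ≤ ⨅ G, E G := le_ciInf hE1
  have hinfpos : 0 < ⨅ G, E G := lt_of_lt_of_le zero_lt_one hinf1
  -- renyiH rewriting
  have hrenyi : renyiH α P = ((1 + ρ) / ρ) * Real.log S := by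
    rw [renyiH, h1mα, ← hSdef, one_div, inv_div]
  constructor

  · -- lower bound
    have hρ' : ρ ≠ 0 := hρ.ne'
    have hlb : ∀ G : X ≃ Fin M, S ^ (1+ρ) / (1 + Real.log M) ^ ρ ≤ E G := by
      intro G
      have hGpos : ∀ x : X, (0:ℝ) < (G x : ℕ) + 1 := by
        intro x
        have : (0:ℝ) ≤ ((G x : ℕ) : ℝ) := Nat.cast_nonneg _
        linarith
      have hharm0 : 0 ≤ ∑ x, (((G x : ℕ) : ℝ) + 1)⁻¹ :=
        Finset.sum_nonneg fun x _ => inv_nonneg.2 (hGpos x).le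
      have hharm : ∑ x, (((G x : ℕ) : ℝ) + 1)⁻¹ ≤ 1 + Real.log M := by
        have h1 : ∑ x, (((G x : ℕ) : ℝ) + 1)⁻¹ = ∑ i : Fin M, (((i : ℕ) : ℝ) + 1)⁻¹ :=
          Fintype.sum_equiv G _ _ (fun x => rfl)
        have h3 : ∑ i : Fin M, (((i : ℕ) : ℝ) + 1)⁻¹ = (harmonic M : ℝ) := by
          rw [← Finset.sum_range (fun i => ((i : ℝ) + 1)⁻¹), harmonic]
          push_cast
          rfl
        rw [h1, h3]
        exact harmonic_le_one_add_log M
      have hconj : Real.HolderConjugate (1+ρ) ((1+ρ)/ρ) := by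
        rw [Real.holderConjugate_iff_eq_conjExponent (by linarith), add_sub_cancel_left]
      have hHold := Real.inner_le_Lp_mul_Lq_of_nonneg (s := Finset.univ) hconj
        (f := fun x => P x ^ α * ((G x : ℕ) + 1 : ℝ) ^ (ρ*α))
        (g := fun x => ((G x : ℕ) + 1 : ℝ) ^ (-(ρ*α)))
        (fun x _ => mul_nonneg (Real.rpow_nonneg (hP0 x) _) (Real.rpow_nonneg (hGpos x).le _))
        (fun x _ => Real.rpow_nonneg (hGpos x).le _)
      have e1 : ∑ x, (P x ^ α * ((G x : ℕ) + 1 : ℝ) ^ (ρ*α)) * ((G x : ℕ) + 1 : ℝ) ^ (-(ρ*α)) = S := by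
        refine Finset.sum_congr rfl fun x _ => ?_
        rw [mul_assoc, ← Real.rpow_add (hGpos x)]
        simp
      have e2 : ∑ x, (P x ^ α * ((G x : ℕ) + 1 : ℝ) ^ (ρ*α)) ^ (1+ρ) = E G := by
        refine Finset.sum_congr rfl fun x _ => ?_
        rw [Real.mul_rpow (Real.rpow_nonneg (hP0 x) _) (Real.rpow_nonneg (hGpos x).le _),
          ← Real.rpow_mul (hP0 x), ← Real.rpow_mul (hGpos x).le,
          mul_assoc ρ α (1+ρ), hαρ, Real.rpow_one, mul_one]
      have hexp : -(ρ*α) * ((1+ρ)/ρ) = -1 := by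
        field_simp
        linear_combination -1 * hαρ
      have e3 : ∑ x, (((G x : ℕ) + 1 : ℝ) ^ (-(ρ*α))) ^ ((1+ρ)/ρ)
          = ∑ x, (((G x : ℕ) : ℝ) + 1)⁻¹ := by
        refine Finset.sum_congr rfl fun x _ => ?_
        rw [← Real.rpow_mul (hGpos x).le, hexp, Real.rpow_neg_one]
      rw [e1, e2, e3, show (1:ℝ)/(1+ρ) = α from hα.symm,
        show (1:ℝ)/((1+ρ)/ρ) = 1-α from by rw [one_div_div, ← h1mα]] at hHold
      have hEpos : 0 < E G := lt_of_lt_of_le zero_lt_one (hE1 G)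
      have hH2 : S ≤ (E G) ^ α * (1 + Real.log M) ^ (1-α) := by
        refine hHold.trans ?_
        exact mul_le_mul_of_nonneg_left
          (Real.rpow_le_rpow hharm0 hharm (by linarith)) (Real.rpow_nonneg hEpos.le α)
      have h5 : S ^ (1+ρ) ≤ E G * (1 + Real.log M) ^ ρ := by
        calc S ^ (1+ρ) ≤ ((E G) ^ α * (1 + Real.log M) ^ (1-α)) ^ (1+ρ) :=
              Real.rpow_le_rpow hSpos.le hH2 h1ρ.le
          _ = E G * (1 + Real.log M) ^ ρ := by
              rw [Real.mul_rpow (Real.rpow_nonneg hEpos.le _) (Real.rpow_nonneg hLM.le _),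
                ← Real.rpow_mul hEpos.le, ← Real.rpow_mul hLM.le, hαρ, Real.rpow_one,
                show (1-α)*(1+ρ) = ρ from by rw [h1mα]; field_simp]
      rw [div_le_iff₀ (Real.rpow_pos_of_pos hLM ρ)]
      exact h5
    have hL : (0:ℝ) < S ^ (1+ρ) / (1 + Real.log M) ^ ρ := by positivity
    have hle : S ^ (1+ρ) / (1 + Real.log M) ^ ρ ≤ ⨅ G, E G := le_ciInf hlb
    calc renyiH α P - Real.log (1 + Real.log M)
        = (1/ρ) * Real.log (S ^ (1+ρ) / (1 + Real.log M) ^ ρ) := by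
          rw [Real.log_div (by positivity) (by positivity), Real.log_rpow hSpos,
            Real.log_rpow hLM, hrenyi]
          field_simp
      _ ≤ (1/ρ) * Real.log (⨅ G, E G) :=
          mul_le_mul_of_nonneg_left (Real.log_le_log hL hle) (by positivity)
  · -- upper bound
    set e := Fintype.equivFin X with he
    set σ := Tuple.sort (fun i => -P (e.symm i)) with hσ
    set G₀ : X ≃ Fin M := e.trans σ.symm with hG₀
    have hmono : Monotone ((fun i => -P (e.symm i)) ∘ σ) := Tuple.monotone_sort _
    have hsymm : ∀ y : X, e.symm (σ (G₀ y)) = y := by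
      intro y
      simp [hG₀, Equiv.trans_apply]
    have hle : ∀ x y : X, G₀ y ≤ G₀ x → P x ≤ P y := by
      intro x y h
      have := hmono h
      simp only [Function.comp_apply, neg_le_neg_iff, hsymm] at this
      linarith [this]
    have hcard : ∀ x : X, (Finset.univ.filter fun y => G₀ y ≤ G₀ x).card = (G₀ x : ℕ) + 1 := by
      intro x
      have hset : (Finset.univ.filter fun y => G₀ y ≤ G₀ x)
          = (Finset.Iic (G₀ x)).map G₀.symm.toEmbedding := by
        ext y
        simp only [Finset.mem_filter, Finset.mem_univ, true_and, Finset.mem_map,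
          Finset.mem_Iic, Equiv.coe_toEmbedding]
        constructor
        · intro h
          exact ⟨G₀ y, h, G₀.symm_apply_apply y⟩
        · rintro ⟨i, hi, rfl⟩
          simpa using hi
      rw [hset, Finset.card_map, Fin.card_Iic]
    have perx : ∀ x : X, P x * ((G₀ x : ℕ) + 1 : ℝ) ^ ρ ≤ P x ^ α * S ^ ρ := by
      intro x
      rcases eq_or_lt_of_le (hP0 x) with hx | hx
      · rw [← hx]
        simp only [zero_mul]
        exact mul_nonneg (Real.rpow_nonneg le_rfl _) (Real.rpow_nonneg hSpos.le _)
      · have key : ((G₀ x : ℕ) + 1 : ℝ) * P x ^ α ≤ S := by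
          have hcast : ((G₀ x : ℕ) + 1 : ℝ)
              = ((Finset.univ.filter fun y => G₀ y ≤ G₀ x).card : ℝ) := by
            rw [hcard x]; push_cast; ring
          calc ((G₀ x : ℕ) + 1 : ℝ) * P x ^ α
              = ∑ _y ∈ Finset.univ.filter (fun y => G₀ y ≤ G₀ x), P x ^ α := by
                rw [Finset.sum_const, nsmul_eq_mul, hcast]
            _ ≤ ∑ y ∈ Finset.univ.filter (fun y => G₀ y ≤ G₀ x), P y ^ α := by
                refine Finset.sum_le_sum fun y hy => ?_
                have hxy : P x ≤ P y := hle x y (Finset.mem_filter.1 hy).2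
                exact Real.rpow_le_rpow (hP0 x) hxy hα0.le
            _ ≤ S := Finset.sum_le_sum_of_subset_of_nonneg (Finset.subset_univ _)
                (fun y _ _ => Real.rpow_nonneg (hP0 y) α)
        have hPα : (0:ℝ) < P x ^ α := Real.rpow_pos_of_pos hx α
        have h1 : ((G₀ x : ℕ) + 1 : ℝ) ≤ S / P x ^ α := (le_div_iff₀ hPα).2 key
        have h2 : ((G₀ x : ℕ) + 1 : ℝ) ^ ρ ≤ (S / P x ^ α) ^ ρ := by
          apply Real.rpow_le_rpow _ h1 hρ.le
          positivity
        have h3 : P x * ((G₀ x : ℕ) + 1 : ℝ) ^ ρ ≤ P x * (S / P x ^ α) ^ ρ :=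
          mul_le_mul_of_nonneg_left h2 (hP0 x)
        have hxpow : P x ^ α * P x ^ (α*ρ) = P x := by
          rw [← Real.rpow_add hx, show α + α*ρ = 1 from by linear_combination hαρ, Real.rpow_one]
        have hpow_pos : (0:ℝ) < P x ^ (α*ρ) := Real.rpow_pos_of_pos hx _
        have h4 : P x * (S / P x ^ α) ^ ρ = P x ^ α * S ^ ρ := by
          rw [Real.div_rpow hSpos.le (Real.rpow_nonneg (hP0 x) _), ← Real.rpow_mul (hP0 x)]
          calc P x * (S ^ ρ / P x ^ (α*ρ))
              = P x ^ α * (P x ^ (α*ρ) * (S ^ ρ / P x ^ (α*ρ))) := by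
                rw [← mul_assoc, hxpow]
            _ = P x ^ α * S ^ ρ := by
                rw [mul_comm (P x ^ (α*ρ)), div_mul_cancel₀ _ hpow_pos.ne']
        rw [h4] at h3
        exact h3
    have hEG₀ : E G₀ ≤ S ^ (1+ρ) := by
      calc E G₀ ≤ ∑ x, P x ^ α * S ^ ρ := Finset.sum_le_sum fun x _ => perx x
        _ = S * S ^ ρ := by rw [← Finset.sum_mul]
        _ = S ^ (1+ρ) := by rw [Real.rpow_add hSpos, Real.rpow_one]
    have hinf_le : ⨅ G, E G ≤ S ^ (1+ρ) := (ciInf_le hbdd G₀).trans hEG₀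
    calc (1/ρ) * Real.log (⨅ G, E G) ≤ (1/ρ) * Real.log (S ^ (1+ρ)) :=
          mul_le_mul_of_nonneg_left (Real.log_le_log hinfpos hinf_le) (by positivity)
      _ = renyiH α P := by
          rw [Real.log_rpow hSpos, hrenyi]
          ring
end

section
/- Define for PMFs P, Q on finite X with Q of full support and α ∈ (0,1): L_α(P,Q) = (α/(1-α)) log(Σ_x P(x)[Σ_a (Q(a)/Q(x))^α]^{(1-α)/α}) − H_α(P). Then L_α(P,Q) ≥ 0, with equality if and only if P = Q. -/
open Real Finset

/-- The divergence quantity `L_α(P,Q)` of the paper. -/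
noncomputable def Lalpha {X : Type*} [Fintype X] (α : ℝ) (P Q : X → ℝ) : ℝ :=
  (α / (1 - α)) * Real.log (∑ x, P x * (∑ a, (Q a / Q x) ^ α) ^ ((1 - α) / α))
    - renyiH α P

lemma gm_aux {α u v : ℝ} (hα0 : 0 < α) (hα1 : α < 1) (hu : 0 ≤ u) (hv : 0 < v) :
    u ^ α * v ^ (1 - α) ≤ α * u + (1 - α) * v ∧
      (u ^ α * v ^ (1 - α) = α * u + (1 - α) * v ↔ u = v) := by
  rcases eq_or_lt_of_le hu with h0 | hupos
  · rw [← h0, Real.zero_rpow (ne_of_gt hα0), zero_mul, mul_zero, zero_add]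
    constructor
    · nlinarith
    · constructor
      · intro h
        have : v = 0 := by
          rcases mul_eq_zero.1 h.symm with h' | h'
          · linarith
          · exact h'
        linarith
      · intro h; rw [← h]; ring
  · rcases eq_or_ne u v with rfl | hne
    · have he : u ^ α * u ^ (1 - α) = u := by
        rw [← Real.rpow_add hupos]; norm_num
      rw [he]
      exact ⟨le_of_eq (by ring), ⟨fun _ => rfl, fun _ => by ring⟩⟩
    · have hlt : u ^ α * v ^ (1 - α) < α * u + (1 - α) * v := by
        have hlog := strictConcaveOn_log_Ioi.2 (Set.mem_Ioi.2 hupos) (Set.mem_Ioi.2 hv)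
          hne hα0 (sub_pos.2 hα1) (by ring)
        have h1 : u ^ α * v ^ (1 - α) = Real.exp (α * Real.log u + (1 - α) * Real.log v) := by
          rw [Real.rpow_def_of_pos hupos, Real.rpow_def_of_pos hv, ← Real.exp_add]
          ring_nf
        rw [h1]
        calc Real.exp (α * Real.log u + (1 - α) * Real.log v)
            < Real.exp (Real.log (α * u + (1 - α) * v)) := by
              apply Real.exp_lt_exp.2
              simpa [smul_eq_mul] using hlog
          _ = α * u + (1 - α) * v := Real.exp_log (by nlinarith)
      exact ⟨le_of_lt hlt, ⟨fun h => absurd h (ne_of_lt hlt), fun h => absurd h hne⟩⟩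

/-- `L_α(P,Q) ≥ 0` with equality iff `P = Q`, for `α ∈ (0,1)` and
`Q` of full support. -/
theorem Lalpha_nonneg_eq_zero_iff
    {X : Type*} [Fintype X] [Nonempty X]
    (α : ℝ) (hα : 0 < α ∧ α < 1)
    (P Q : X → ℝ) (hP : IsPMF P) (hQ : IsPMF Q) (hQpos : ∀ x, 0 < Q x) :
    0 ≤ Lalpha α P Q ∧ (Lalpha α P Q = 0 ↔ P = Q) := by
  obtain ⟨hα0, hα1⟩ := hα
  have h1α : 0 < 1 - α := by linarith
  obtain ⟨hPnn, hPsum⟩ := hP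
  obtain ⟨hQnn, hQsum⟩ := hQ
  set c := ∑ a, Q a ^ α with hc
  have hcpos : 0 < c :=
    Finset.sum_pos (fun a _ => Real.rpow_pos_of_pos (hQpos a) α) Finset.univ_nonempty
  set A := ∑ x, P x * Q x ^ (α - 1) with hA
  have hx0 : ∃ x, 0 < P x := by
    by_contra h; push_neg at h
    have h0 : ∑ x : X, P x = 0 :=
      Finset.sum_eq_zero (fun x _ => le_antisymm (h x) (hPnn x))
    rw [hPsum] at h0; norm_num at h0
  obtain ⟨x0, hx0⟩ := hx0
  have hApos : 0 < A :=
    Finset.sum_pos'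
      (fun x _ => mul_nonneg (hPnn x) (Real.rpow_pos_of_pos (hQpos x) _).le)
      ⟨x0, Finset.mem_univ x0, mul_pos hx0 (Real.rpow_pos_of_pos (hQpos x0) _)⟩
  set T := ∑ x, P x ^ α with hT
  have hTpos : 0 < T :=
    Finset.sum_pos' (fun x _ => Real.rpow_nonneg (hPnn x) α)
      ⟨x0, Finset.mem_univ x0, Real.rpow_pos_of_pos hx0 α⟩
  set D := A ^ α * c ^ (1 - α) with hD
  have hDpos : 0 < D :=
    mul_pos (Real.rpow_pos_of_pos hApos α) (Real.rpow_pos_of_pos hcpos (1 - α))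
  -- rewrite the main sum
  have hS : (∑ x, P x * (∑ a, (Q a / Q x) ^ α) ^ ((1 - α) / α))
      = A * c ^ ((1 - α) / α) := by
    rw [hA, Finset.sum_mul]
    apply Finset.sum_congr rfl
    intro x _
    have hinner : ∑ a, (Q a / Q x) ^ α = c / Q x ^ α := by
      rw [hc, Finset.sum_div]
      exact Finset.sum_congr rfl (fun a _ => Real.div_rpow (hQpos a).le (hQpos x).le α)
    rw [hinner]
    have h2 : (c / Q x ^ α) ^ ((1 - α) / α)
        = Q x ^ (α - 1) * c ^ ((1 - α) / α) := by
      rw [Real.div_rpow hcpos.le (Real.rpow_nonneg (hQpos x).le α),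
          ← Real.rpow_mul (hQpos x).le]
      have he : α * ((1 - α) / α) = 1 - α := by
        field_simp
      rw [he]
      have hneg : Q x ^ (α - 1) = (Q x ^ (1 - α))⁻¹ := by
        rw [← Real.rpow_neg (hQpos x).le]; norm_num
      rw [hneg, div_eq_mul_inv]; ring
    rw [h2]; ring
  -- rewrite Lalpha
  have hLrw : Lalpha α P Q = (1 / (1 - α)) * (Real.log D - Real.log T) := by
    unfold Lalpha renyiH
    rw [hS, ← hT, Real.log_mul (ne_of_gt hApos)
        (ne_of_gt (Real.rpow_pos_of_pos hcpos _)), Real.log_rpow hcpos,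
      hD, Real.log_mul (ne_of_gt (Real.rpow_pos_of_pos hApos _))
        (ne_of_gt (Real.rpow_pos_of_pos hcpos _)),
      Real.log_rpow hApos, Real.log_rpow hcpos]
    field_simp
  -- weighted vectors
  set u : X → ℝ := fun x => P x * Q x ^ (α - 1) / A with hu
  set v : X → ℝ := fun x => Q x ^ α / c with hv
  have hunn : ∀ x, 0 ≤ u x := fun x =>
    div_nonneg (mul_nonneg (hPnn x) (Real.rpow_pos_of_pos (hQpos x) _).le) hApos.le
  have hvpos : ∀ x, 0 < v x := fun x =>
    div_pos (Real.rpow_pos_of_pos (hQpos x) α) hcpos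
  have hgm := fun x => gm_aux hα0 hα1 (hunn x) (hvpos x)
  have hkey : ∀ x, u x ^ α * v x ^ (1 - α) = P x ^ α / D := by
    intro x
    rw [hu, hv, hD]
    simp only
    rw [Real.div_rpow (mul_nonneg (hPnn x) (Real.rpow_pos_of_pos (hQpos x) _).le) hApos.le,
        Real.div_rpow (Real.rpow_nonneg (hQpos x).le α) hcpos.le,
        Real.mul_rpow (hPnn x) (Real.rpow_pos_of_pos (hQpos x) _).le,
        ← Real.rpow_mul (hQpos x).le, ← Real.rpow_mul (hQpos x).le]
    have hq : Q x ^ ((α - 1) * α) * Q x ^ (α * (1 - α)) = 1 := by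
      rw [← Real.rpow_add (hQpos x), show (α - 1) * α + α * (1 - α) = 0 by ring,
        Real.rpow_zero]
    field_simp
    calc P x ^ α * Q x ^ (α * (α - 1)) * Q x ^ (α * (1 - α))
        = P x ^ α * (Q x ^ ((α - 1) * α) * Q x ^ (α * (1 - α))) := by
          rw [mul_comm α (α - 1)]; ring
      _ = P x ^ α := by rw [hq]; ring
  have hsum_u : ∑ x, u x = 1 := by
    rw [hu]; simp only; rw [← Finset.sum_div, ← hA, div_self (ne_of_gt hApos)]
  have hsum_v : ∑ x, v x = 1 := by
    rw [hv]; simp only; rw [← Finset.sum_div, ← hc, div_self (ne_of_gt hcpos)]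
  have hsum_uv : ∑ x, (α * u x + (1 - α) * v x) = 1 := by
    rw [Finset.sum_add_distrib, ← Finset.mul_sum, ← Finset.mul_sum, hsum_u, hsum_v]
    ring
  have hsum_gm : ∑ x, u x ^ α * v x ^ (1 - α) = T / D := by
    simp_rw [hkey]; rw [← Finset.sum_div, ← hT]
  have hineq : T / D ≤ 1 := by
    rw [← hsum_gm]
    calc ∑ x, u x ^ α * v x ^ (1 - α) ≤ ∑ x, (α * u x + (1 - α) * v x) :=
          Finset.sum_le_sum (fun x _ => (hgm x).1)
      _ = 1 := hsum_uv
  have hTle : T ≤ D := (div_le_one hDpos).1 hineq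
  -- equality characterization
  have hEq : T = D ↔ P = Q := by
    constructor
    · intro h
      have hsum0 : ∑ x, ((α * u x + (1 - α) * v x) - u x ^ α * v x ^ (1 - α)) = 0 := by
        rw [Finset.sum_sub_distrib, hsum_uv, hsum_gm, h, div_self (ne_of_gt hDpos),
          sub_self]
      have hall := (Finset.sum_eq_zero_iff_of_nonneg
        (fun x _ => sub_nonneg.2 (hgm x).1)).1 hsum0
      have huv : ∀ x, u x = v x := by
        intro x
        exact (hgm x).2.1 (sub_eq_zero.1 (hall x (Finset.mem_univ x))).symm
      have hPx : ∀ x, P x = A / c * Q x := by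
        intro x
        have h1 : P x * Q x ^ (α - 1) / A = Q x ^ α / c := huv x
        have hqx : Q x ^ α = Q x ^ (α - 1) * Q x := by
          rw [← Real.rpow_add_one (ne_of_gt (hQpos x)) (α - 1)]
          norm_num
        rw [hqx] at h1
        have hq1 : Q x ^ (α - 1) ≠ 0 := ne_of_gt (Real.rpow_pos_of_pos (hQpos x) _)
        rw [div_eq_div_iff (ne_of_gt hApos) (ne_of_gt hcpos)] at h1
        have h3 : P x * c = Q x * A := by
          apply mul_right_cancel₀ hq1
          linear_combination h1
        field_simp
        linarith [h3]
      have hsum1 : (1 : ℝ) = A / c := by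
        calc (1 : ℝ) = ∑ x, P x := hPsum.symm
          _ = ∑ x, A / c * Q x := Finset.sum_congr rfl (fun x _ => hPx x)
          _ = A / c * ∑ x, Q x := by rw [Finset.mul_sum]
          _ = A / c := by rw [hQsum, mul_one]
      funext x
      rw [hPx x, ← hsum1, one_mul]
    · intro h
      have hAc : A = c := by
        rw [hA, hc]
        apply Finset.sum_congr rfl
        intro x _
        rw [h, show α = 1 + (α - 1) by ring, Real.rpow_add (hQpos x), Real.rpow_one]
        norm_num
      have hTc : T = c := by
        rw [hT, hc]
        exact Finset.sum_congr rfl (fun x _ => by rw [h])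
      rw [hTc, hD, hAc, ← Real.rpow_add hcpos]
      norm_num
  refine ⟨?_, ?_⟩
  · rw [hLrw]
    apply mul_nonneg (by positivity)
    exact sub_nonneg.2 (Real.log_le_log hTpos hTle)
  · rw [hLrw]
    constructor
    · intro h
      have h1 : Real.log D - Real.log T = 0 := by
        rcases mul_eq_zero.1 h with h' | h'
        · exact absurd h' (by positivity)
        · exact h'
      have h2 : Real.log T = Real.log D := by linarith
      exact hEq.1 (Real.log_injOn_pos (Set.mem_Ioi.2 hTpos) (Set.mem_Ioi.2 hDpos) h2)
    · intro h
      rw [← hEq.2 h]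
      simp
end

section
/- For PMFs P and Q on a finite set X with full support and α ∈ (0,1)∪(1,∞), L_α(P,Q) = D_{1/α}(P' ∥ Q'), where P'(x) = P(x)^α / Σ_a P(a)^α is the α-tilting of P (similarly Q'), and D_β(R∥S) = (1/(β−1)) log Σ_x R(x)^β S(x)^{1−β} is the Rényi divergence of order β. -/
open Real Finset

/-- The Rényi information divergence of order `β`. -/
noncomputable def renyiDiv {X : Type*} [Fintype X] (β : ℝ) (R S : X → ℝ) : ℝ :=
  (1 / (β - 1)) * Real.log (∑ x, R x ^ β * S x ^ (1 - β))

/-- The `α`-tilting of a PMF `P`. -/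
noncomputable def tilt {X : Type*} [Fintype X] (α : ℝ) (P : X → ℝ) : X → ℝ :=
  fun x => P x ^ α / ∑ a, P a ^ α

/-- `L_α(P,Q) = D_{1/α}(P' ∥ Q')` for full-support PMFs `P`, `Q`
and `α > 0`, `α ≠ 1`, where `P'`, `Q'` are the `α`-tiltings. -/
theorem Lalpha_eq_renyiDiv_of_tilts
    {X : Type*} [Fintype X] [Nonempty X]
    (α : ℝ) (hα : 0 < α) (hα1 : α ≠ 1)
    (P Q : X → ℝ) (hP : IsPMF P) (hQ : IsPMF Q)
    (hPpos : ∀ x, 0 < P x) (hQpos : ∀ x, 0 < Q x) :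
    Lalpha α P Q = renyiDiv (1 / α) (tilt α P) (tilt α Q) := by
  have hα0 : α ≠ 0 := ne_of_gt hα
  have h1α : 1 - α ≠ 0 := by intro h; apply hα1; linarith
  set Sp := ∑ x, P x ^ α with hSp
  set Sq := ∑ x, Q x ^ α with hSq
  set T := ∑ x, P x * Q x ^ (α - 1) with hT
  have hSpPos : 0 < Sp := Finset.sum_pos (fun x _ => Real.rpow_pos_of_pos (hPpos x) α)
    Finset.univ_nonempty
  have hSqPos : 0 < Sq := Finset.sum_pos (fun x _ => Real.rpow_pos_of_pos (hQpos x) α)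
    Finset.univ_nonempty
  have hTPos : 0 < T := Finset.sum_pos (fun x _ => mul_pos (hPpos x)
    (Real.rpow_pos_of_pos (hQpos x) _)) Finset.univ_nonempty
  have hL : (∑ x, P x * (∑ a, (Q a / Q x) ^ α) ^ ((1 - α) / α))
      = Sq ^ ((1 - α) / α) * T := by
    rw [hT, Finset.mul_sum]
    apply Finset.sum_congr rfl
    intro x _
    have hin : (∑ a, (Q a / Q x) ^ α) = Sq / Q x ^ α := by
      rw [hSq, Finset.sum_div]
      exact Finset.sum_congr rfl fun a _ => Real.div_rpow (hQpos a).le (hQpos x).le α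
    rw [hin, Real.div_rpow hSqPos.le (Real.rpow_pos_of_pos (hQpos x) α).le _,
      ← Real.rpow_mul (hQpos x).le]
    have : α * ((1 - α) / α) = -(α - 1) := by field_simp; ring
    rw [this, Real.rpow_neg (hQpos x).le, div_eq_mul_inv, inv_inv]
    ring
  have hR : (∑ x, tilt α P x ^ (1/α) * tilt α Q x ^ (1 - 1/α))
      = T / (Sp ^ (1/α) * Sq ^ (1 - 1/α)) := by
    rw [hT, Finset.sum_div]
    apply Finset.sum_congr rfl
    intro x _
    unfold tilt
    rw [← hSp, ← hSq,
      Real.div_rpow (Real.rpow_pos_of_pos (hPpos x) α).le hSpPos.le,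
      Real.div_rpow (Real.rpow_pos_of_pos (hQpos x) α).le hSqPos.le,
      ← Real.rpow_mul (hPpos x).le, ← Real.rpow_mul (hQpos x).le]
    have e1 : α * (1/α) = 1 := by field_simp
    have e2 : α * (1 - 1/α) = α - 1 := by field_simp
    rw [e1, e2, Real.rpow_one]
    field_simp
  unfold Lalpha renyiDiv renyiH
  rw [hL, hR, ← hSp]
  rw [Real.log_mul (ne_of_gt (Real.rpow_pos_of_pos hSqPos _)) (ne_of_gt hTPos),
    Real.log_rpow hSqPos,
    Real.log_div (ne_of_gt hTPos)
      (ne_of_gt (mul_pos (Real.rpow_pos_of_pos hSpPos _) (Real.rpow_pos_of_pos hSqPos _))),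
    Real.log_mul (ne_of_gt (Real.rpow_pos_of_pos hSpPos _))
      (ne_of_gt (Real.rpow_pos_of_pos hSqPos _)),
    Real.log_rpow hSpPos, Real.log_rpow hSqPos]
  field_simp
  ring
end

section
/- As α → 1, L_α(P,Q) converges to the Kullback–Leibler divergence D(P ∥ Q) = Σ_x P(x) log(P(x)/Q(x)), for PMFs P, Q on a finite set X with full support. -/
open Real Finset Filter Topology

/-- as `α → 1`, `L_α(P,Q)` converges to the Kullback–Leibler
divergence `D(P ∥ Q) = ∑_x P x log (P x / Q x)`, for full-support PMFs. -/
theorem Lalpha_tendsto_KL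
    {X : Type*} [Fintype X] [Nonempty X]
    (P Q : X → ℝ) (hP : IsPMF P) (hQ : IsPMF Q)
    (hPpos : ∀ x, 0 < P x) (hQpos : ∀ x, 0 < Q x) :
    Tendsto (fun α : ℝ => Lalpha α P Q) (𝓝[≠] 1)
      (𝓝 (∑ x, P x * Real.log (P x / Q x))) := by
  set F : ℝ → ℝ := fun α => ∑ x, P x * (∑ a, (Q a / Q x) ^ α) ^ ((1 - α) / α) with hFdef
  set G : ℝ → ℝ := fun α => ∑ x, P x ^ α with hGdef
  have hS1 : ∀ x : X, (∑ a, (Q a / Q x) ^ (1 : ℝ)) = 1 / Q x := by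
    intro x
    simp only [Real.rpow_one]
    rw [← Finset.sum_div, hQ.2]
  -- value of F at 1
  have hF1 : F 1 = 1 := by
    have : ∀ x : X, P x * (∑ a, (Q a / Q x) ^ (1:ℝ)) ^ ((1 - (1:ℝ)) / 1) = P x := by
      intro x
      norm_num
    simp only [hFdef]
    rw [Finset.sum_congr rfl fun x _ => this x, hP.2]
  have hG1 : G 1 = 1 := by
    simp only [hGdef, Real.rpow_one, hP.2]
  -- derivative of exponent (1-α)/α at 1
  have he : HasDerivAt (fun α : ℝ => (1 - α) / α) (-1) 1 := by
    have h1 : HasDerivAt (fun α : ℝ => 1 - α) (-1) 1 := by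
      exact (hasDerivAt_id' 1).const_sub 1
    have h2 : HasDerivAt (fun α : ℝ => α) 1 1 := hasDerivAt_id 1
    have := h1.fun_div h2 one_ne_zero
    refine this.congr_deriv ?_
    norm_num
  -- derivative of F at 1
  have hFderiv : HasDerivAt F (∑ x, P x * Real.log (Q x)) 1 := by
    apply HasDerivAt.fun_sum
    intro x _
    have hS : HasDerivAt (fun α : ℝ => ∑ a, (Q a / Q x) ^ α)
        (∑ a, (Q a / Q x) ^ (1:ℝ) * Real.log (Q a / Q x)) 1 := by
      apply HasDerivAt.fun_sum
      intro a _
      exact (Real.hasStrictDerivAt_const_rpow (div_pos (hQpos a) (hQpos x)) 1).hasDerivAt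
    have hSpos : 0 < ∑ a, (Q a / Q x) ^ (1:ℝ) := by
      rw [hS1 x]
      exact div_pos one_pos (hQpos x)
    have hrpow := (hS.rpow he hSpos).const_mul (P x)
    refine hrpow.congr_deriv ?_
    rw [hS1 x]
    have h1 : ((1:ℝ) - 1) / 1 = 0 := by norm_num
    rw [h1]
    rw [Real.rpow_zero, Real.log_div one_ne_zero (ne_of_gt (hQpos x)), Real.log_one]
    ring
  -- derivative of G at 1
  have hGderiv : HasDerivAt G (∑ x, P x * Real.log (P x)) 1 := by
    apply HasDerivAt.fun_sum
    intro x _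
    have := (Real.hasStrictDerivAt_const_rpow (hPpos x) 1).hasDerivAt
    convert this using 1
    rw [Real.rpow_one]
  -- log compositions
  have hf : HasDerivAt (fun α => Real.log (F α)) (∑ x, P x * Real.log (Q x)) 1 := by
    have := hFderiv.log (by rw [hF1]; norm_num)
    rwa [hF1, div_one] at this
  have hg : HasDerivAt (fun α => Real.log (G α)) (∑ x, P x * Real.log (P x)) 1 := by
    have := hGderiv.log (by rw [hG1]; norm_num)
    rwa [hG1, div_one] at this
  have hsf := hasDerivAt_iff_tendsto_slope.mp hf
  have hsg := hasDerivAt_iff_tendsto_slope.mp hg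
  -- combined limit
  have hneg : Tendsto (fun α : ℝ => -α) (𝓝[≠] (1:ℝ)) (𝓝 (-1)) :=
    (continuous_neg.tendsto 1).mono_left nhdsWithin_le_nhds
  have hmain : Tendsto
      (fun α : ℝ => -α * slope (fun β => Real.log (F β)) 1 α
        + slope (fun β => Real.log (G β)) 1 α)
      (𝓝[≠] (1:ℝ))
      (𝓝 (-1 * (∑ x, P x * Real.log (Q x)) + ∑ x, P x * Real.log (P x))) :=
    (hneg.mul hsf).add hsg
  have hval : -1 * (∑ x, P x * Real.log (Q x)) + ∑ x, P x * Real.log (P x)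
      = ∑ x, P x * Real.log (P x / Q x) := by
    rw [neg_one_mul, neg_add_eq_sub, ← Finset.sum_sub_distrib]
    apply Finset.sum_congr rfl
    intro x _
    rw [Real.log_div (ne_of_gt (hPpos x)) (ne_of_gt (hQpos x))]
    ring
  rw [← hval]
  apply hmain.congr'
  filter_upwards [self_mem_nhdsWithin] with α hα
  have hα1 : α - 1 ≠ 0 := sub_ne_zero.mpr hα
  have hFlog1 : Real.log (F 1) = 0 := by rw [hF1, Real.log_one]
  have hGlog1 : Real.log (G 1) = 0 := by rw [hG1, Real.log_one]
  rw [slope_def_field, slope_def_field, hFlog1, hGlog1]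
  show -α * ((Real.log (F α) - 0) / (α - 1)) + (Real.log (G α) - 0) / (α - 1)
      = Lalpha α P Q
  have hL : Lalpha α P Q
      = α / (1 - α) * Real.log (F α) - 1 / (1 - α) * Real.log (G α) := rfl
  rw [hL]
  have h1α : (1:ℝ) - α ≠ 0 := fun h => hα1 (by linarith)
  field_simp
  ring
end

section
/- Let ρ > 0, α = 1/(1+ρ). For any PMF P on a finite set X and any bijective guessing list G with associated PMF Q_G(x) = G(x)^{-(1+ρ)} / Σ_i i^{-(1+ρ)}, the redundancy R(P,G) = (1/ρ) log E_P[G(X)^ρ] − (1/ρ) log E_P[G_P(X)^ρ] satisfies |R(P,G) − L_α(P, Q_G)| ≤ log(1 + ln|X|). -/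
open Real Finset

private lemma sum_equiv_range' {X : Type*} [Fintype X] (E : X ≃ Fin (Fintype.card X))
    (f : ℕ → ℝ) : ∑ x, f ((E x : Fin (Fintype.card X)) : ℕ)
      = ∑ i ∈ Finset.range (Fintype.card X), f i := by
  rw [← Fin.sum_univ_eq_sum_range]
  exact Fintype.sum_equiv E _ _ (fun x => rfl)

/-- the guessing redundancy `R(P,G)` is within
`log(1 + ln|X|)` of `L_α(P, Q_G)`, where `Q_G(x) ∝ G(x)^{-(1+ρ)}` and
`α = 1/(1+ρ)`. -/
theorem guessing_redundancy_bound
    {X : Type*} [Fintype X] [Nonempty X]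
    (ρ : ℝ) (hρ : 0 < ρ) (α : ℝ) (hα : α = 1 / (1 + ρ))
    (P : X → ℝ) (hP : IsPMF P)
    (G : X ≃ Fin (Fintype.card X))
    (GP : X ≃ Fin (Fintype.card X))
    (hGP : ∀ x x', P x > P x' → (GP x : ℕ) < (GP x' : ℕ))
    (QG : X → ℝ)
    (hQG : ∀ x, QG x = ((G x : ℕ) + 1 : ℝ) ^ (-(1 + ρ))
        / ∑ i ∈ Finset.range (Fintype.card X), ((i : ℝ) + 1) ^ (-(1 + ρ))) :
    |((1 / ρ) * Real.log (∑ x, P x * ((G x : ℕ) + 1 : ℝ) ^ ρ)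
        - (1 / ρ) * Real.log (∑ x, P x * ((GP x : ℕ) + 1 : ℝ) ^ ρ))
      - Lalpha α P QG| ≤ Real.log (1 + Real.log (Fintype.card X)) := by
  obtain ⟨hPnn, hPsum⟩ := hP
  have hNpos : 0 < Fintype.card X := Fintype.card_pos
  have hρ1 : (0:ℝ) < 1 + ρ := by linarith
  have hαpos : 0 < α := by rw [hα]; positivity
  have hα0 : α ≠ 0 := hαpos.ne'
  have hα1 : α * (1 + ρ) = 1 := by rw [hα]; field_simp
  have hαlt : α < 1 := by rw [hα, div_lt_one hρ1]; linarith
  have h1mα : 1 - α = ρ * α := by linear_combination -hα1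
  set H : ℝ := ∑ i ∈ Finset.range (Fintype.card X), ((i:ℝ)+1)⁻¹ with hH
  have hH1 : (1:ℝ) ≤ H := by
    have h0 : (0:ℕ) ∈ Finset.range (Fintype.card X) := Finset.mem_range.2 hNpos
    have := Finset.single_le_sum (f := fun i : ℕ => ((i:ℝ)+1)⁻¹)
      (fun i _ => by positivity) h0
    simpa [hH] using this
  have hHpos : (0:ℝ) < H := lt_of_lt_of_le one_pos hH1
  set S : ℝ := ∑ x, P x ^ α with hS
  set EG : ℝ := ∑ x, P x * ((G x : ℕ) + 1 : ℝ) ^ ρ with hEG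
  set EGP : ℝ := ∑ x, P x * ((GP x : ℕ) + 1 : ℝ) ^ ρ with hEGP
  have htpos : ∀ (E : X ≃ Fin (Fintype.card X)) (x : X), (0:ℝ) < ((E x : ℕ) + 1 : ℝ) := by
    intro E x; positivity
  have hEge : ∀ (E : X ≃ Fin (Fintype.card X)), (1:ℝ) ≤ ∑ x, P x * ((E x : ℕ) + 1 : ℝ) ^ ρ := by
    intro E
    calc (1:ℝ) = ∑ x, P x := hPsum.symm
    _ ≤ _ := by
        refine Finset.sum_le_sum fun x _ => ?_
        have h1 : (1:ℝ) ≤ ((E x : ℕ) + 1 : ℝ) := by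
          have : (0:ℝ) ≤ ((E x : ℕ) : ℝ) := Nat.cast_nonneg _
          linarith
        have h2 : (1:ℝ) ≤ ((E x : ℕ) + 1 : ℝ) ^ ρ := Real.one_le_rpow h1 hρ.le
        calc P x = P x * 1 := (mul_one _).symm
        _ ≤ P x * ((E x : ℕ) + 1 : ℝ) ^ ρ := mul_le_mul_of_nonneg_left h2 (hPnn x)
  have hEGpos : (0:ℝ) < EG := lt_of_lt_of_le one_pos (by rw [hEG]; exact hEge G)
  have hEGPpos : (0:ℝ) < EGP := lt_of_lt_of_le one_pos (by rw [hEGP]; exact hEge GP)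
  have hSpos : (0:ℝ) < S := by
    obtain ⟨x, hx⟩ : ∃ x, 0 < P x := by
      by_contra hcon
      push_neg at hcon
      have : ∑ x, P x ≤ 0 := Finset.sum_nonpos fun x _ => hcon x
      linarith
    have h1 : 0 < P x ^ α := Real.rpow_pos_of_pos hx α
    have h2 : P x ^ α ≤ S := by
      rw [hS]
      exact Finset.single_le_sum (fun y _ => Real.rpow_nonneg (hPnn y) α) (Finset.mem_univ x)
    linarith
  have hHle : H ≤ 1 + Real.log (Fintype.card X) := by
    have h1 : H = (harmonic (Fintype.card X) : ℝ) := by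
      rw [hH, harmonic]
      push_cast
      rfl
    rw [h1]; exact harmonic_le_one_add_log (Fintype.card X)
  have hHre : ∀ (E : X ≃ Fin (Fintype.card X)), ∑ x, (((E x : ℕ) + 1 : ℝ))⁻¹ = H := by
    intro E
    rw [hH]
    exact sum_equiv_range' E (fun i => ((i:ℝ)+1)⁻¹)
  have hcpos : (0:ℝ) < ∑ i ∈ Finset.range (Fintype.card X), ((i:ℝ)+1) ^ (-(1+ρ)) := by
    refine Finset.sum_pos (fun i _ => Real.rpow_pos_of_pos (by positivity) _) ?_
    exact Finset.nonempty_range_iff.2 hNpos.ne'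
  -- the inner sum in Lalpha
  have hinner : ∀ x, ∑ a, (QG a / QG x) ^ α = ((G x : ℕ) + 1 : ℝ) * H := by
    intro x
    have hx' := htpos G x
    have hterm : ∀ a, (QG a / QG x) ^ α
        = ((G x : ℕ) + 1 : ℝ) * (((G a : ℕ) + 1 : ℝ))⁻¹ := by
      intro a
      have ha' := htpos G a
      rw [hQG a, hQG x, div_div_div_comm, div_self hcpos.ne', div_one,
        Real.div_rpow (Real.rpow_nonneg ha'.le _) (Real.rpow_nonneg hx'.le _),
        ← Real.rpow_mul ha'.le, ← Real.rpow_mul hx'.le,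
        show -(1+ρ)*α = -1 by linear_combination -hα1,
        Real.rpow_neg_one, Real.rpow_neg_one, div_eq_mul_inv, inv_inv]
      ring
    simp_rw [hterm]
    rw [← Finset.mul_sum, hHre G]
  -- simplification of Lalpha
  have hLa : Lalpha α P QG
      = Real.log H + (1/ρ) * Real.log EG - ((1+ρ)/ρ) * Real.log S := by
    simp only [Lalpha, renyiH]
    have e1 : ∀ x ∈ (univ : Finset X),
        P x * (∑ a, (QG a / QG x) ^ α) ^ ((1-α)/α)
          = H ^ ρ * (P x * ((G x : ℕ) + 1 : ℝ) ^ ρ) := by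
      intro x _
      rw [hinner x, show (1-α)/α = ρ by rw [h1mα]; field_simp,
        Real.mul_rpow (htpos G x).le hHpos.le]
      ring
    rw [Finset.sum_congr rfl e1, ← Finset.mul_sum, ← hEG, ← hS,
      Real.log_mul (Real.rpow_pos_of_pos hHpos ρ).ne' hEGpos.ne', Real.log_rpow hHpos,
      show α/(1-α) = 1/ρ by rw [h1mα]; field_simp,
      show 1/(1-α) = (1+ρ)/ρ by rw [h1mα, hα]; field_simp]
    field_simp
  -- Arikan upper bound for the optimal guesser
  have hA : EGP ≤ S ^ (1+ρ) := by
    have hpt : ∀ x, P x * ((GP x : ℕ) + 1 : ℝ) ^ ρ ≤ P x ^ α * S ^ ρ := by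
      intro x
      rcases eq_or_lt_of_le (hPnn x) with h0 | hx
      · rw [← h0, zero_mul, Real.zero_rpow hα0, zero_mul]
      · have hkS : ((GP x : ℕ) + 1 : ℝ) ≤ S / P x ^ α := by
          classical
          have hTcard : (univ.filter (fun a => (GP a : ℕ) ≤ (GP x : ℕ))).card
              = (GP x : ℕ) + 1 := by
            have h1 : (univ.filter (fun a => (GP a : ℕ) ≤ (GP x : ℕ))).card
                = (Finset.Iic (GP x)).card := by
              refine Finset.card_equiv GP (fun a => ?_)
              simp only [Finset.mem_filter, Finset.mem_univ, true_and, Finset.mem_Iic,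
                Fin.le_def]
            rw [h1, Fin.card_Iic]
          have hmem : ∀ a ∈ univ.filter (fun a => (GP a : ℕ) ≤ (GP x : ℕ)),
              (1:ℝ) ≤ (P a / P x) ^ α := by
            intro a ha
            have hle : (GP a : ℕ) ≤ (GP x : ℕ) := by
              simpa using (Finset.mem_filter.1 ha).2
            have hPa : P x ≤ P a := by
              by_contra hcon
              push_neg at hcon
              have := hGP x a hcon
              omega
            refine Real.one_le_rpow ?_ hαpos.le
            rw [le_div_iff₀ hx, one_mul]
            exact hPa
          calc ((GP x : ℕ) + 1 : ℝ)
              = ((univ.filter (fun a => (GP a : ℕ) ≤ (GP x : ℕ))).card : ℝ) := by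
                rw [hTcard]; push_cast; ring
          _ = ∑ _a ∈ univ.filter (fun a => (GP a : ℕ) ≤ (GP x : ℕ)), (1:ℝ) := by simp
          _ ≤ ∑ a ∈ univ.filter (fun a => (GP a : ℕ) ≤ (GP x : ℕ)), (P a / P x) ^ α :=
              Finset.sum_le_sum hmem
          _ ≤ ∑ a, (P a / P x) ^ α := by
              refine Finset.sum_le_sum_of_subset_of_nonneg (Finset.subset_univ _)
                (fun a _ _ => Real.rpow_nonneg ?_ α)
              exact div_nonneg (hPnn a) hx.le
          _ = S / P x ^ α := by
              rw [hS, Finset.sum_div]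
              exact Finset.sum_congr rfl fun a _ => Real.div_rpow (hPnn a) hx.le α
        have h2 : ((GP x : ℕ) + 1 : ℝ) ^ ρ ≤ (S / P x ^ α) ^ ρ :=
          Real.rpow_le_rpow (by positivity) hkS hρ.le
        have h3 : P x * ((GP x : ℕ) + 1 : ℝ) ^ ρ ≤ P x * (S / P x ^ α) ^ ρ :=
          mul_le_mul_of_nonneg_left h2 hx.le
        have h4 : P x * (S / P x ^ α) ^ ρ = P x ^ α * S ^ ρ := by
          rw [Real.div_rpow hSpos.le (Real.rpow_nonneg (hPnn x) α),
            ← Real.rpow_mul (hPnn x),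
            show α * ρ = 1 - α by linear_combination -h1mα]
          have hxsplit : P x ^ α * P x ^ (1-α) = P x := by
            rw [← Real.rpow_add hx]; norm_num
          have hne : P x ^ (1-α) ≠ 0 := (Real.rpow_pos_of_pos hx _).ne'
          rw [div_eq_mul_inv]
          calc P x * (S ^ ρ * (P x ^ (1-α))⁻¹)
              = (P x ^ α * P x ^ (1-α)) * (S ^ ρ * (P x ^ (1-α))⁻¹) := by rw [hxsplit]
          _ = P x ^ α * S ^ ρ * (P x ^ (1-α) * (P x ^ (1-α))⁻¹) := by ring
          _ = P x ^ α * S ^ ρ := by rw [mul_inv_cancel₀ hne, mul_one]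
        exact h3.trans_eq h4
    calc EGP = ∑ x, P x * ((GP x : ℕ) + 1 : ℝ) ^ ρ := hEGP
    _ ≤ ∑ x, P x ^ α * S ^ ρ := Finset.sum_le_sum fun x _ => hpt x
    _ = S * S ^ ρ := by rw [← Finset.sum_mul, ← hS]
    _ = S ^ (1+ρ) := by rw [Real.rpow_add hSpos, Real.rpow_one]
  -- Hölder lower bound
  have hB : S ^ (1+ρ) ≤ EGP * H ^ ρ := by
    have hpq : Real.HolderConjugate (1/α) (1/(1-α)) := by
      rw [Real.holderConjugate_iff]
      constructor
      · rw [lt_div_iff₀ hαpos, one_mul]; exact hαlt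
      · rw [one_div, one_div, inv_inv, inv_inv]; ring
    have hhold := Real.inner_le_Lp_mul_Lq (s := (univ : Finset X))
      (f := fun x => (P x * ((GP x : ℕ) + 1 : ℝ) ^ ρ) ^ α)
      (g := fun x => ((GP x : ℕ) + 1 : ℝ) ^ (α-1)) hpq
    have e1 : ∀ x : X, (P x * ((GP x : ℕ) + 1 : ℝ) ^ ρ) ^ α
        * ((GP x : ℕ) + 1 : ℝ) ^ (α-1) = P x ^ α := by
      intro x
      have ht := htpos GP x
      rw [Real.mul_rpow (hPnn x) (Real.rpow_nonneg ht.le ρ), ← Real.rpow_mul ht.le,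
        mul_assoc, ← Real.rpow_add ht,
        show ρ * α + (α - 1) = 0 by linarith [h1mα],
        Real.rpow_zero, mul_one]
    have e2 : ∀ x : X, |(P x * ((GP x : ℕ) + 1 : ℝ) ^ ρ) ^ α| ^ (1/α)
        = P x * ((GP x : ℕ) + 1 : ℝ) ^ ρ := by
      intro x
      have hb : (0:ℝ) ≤ P x * ((GP x : ℕ) + 1 : ℝ) ^ ρ :=
        mul_nonneg (hPnn x) (Real.rpow_nonneg (htpos GP x).le ρ)
      rw [abs_of_nonneg (Real.rpow_nonneg hb α), ← Real.rpow_mul hb,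
        mul_one_div_cancel hα0, Real.rpow_one]
    have e3 : ∀ x : X, |((GP x : ℕ) + 1 : ℝ) ^ (α-1)| ^ (1/(1-α))
        = (((GP x : ℕ) + 1 : ℝ))⁻¹ := by
      intro x
      have ht := htpos GP x
      have h10 : 1 - α ≠ 0 := by linarith
      rw [abs_of_nonneg (Real.rpow_nonneg ht.le _), ← Real.rpow_mul ht.le,
        show (α-1) * (1/(1-α)) = -1 by field_simp; ring,
        Real.rpow_neg_one]
    simp only [e1, e2, e3] at hhold
    rw [one_div_one_div, one_div_one_div, hHre GP, ← hS, ← hEGP] at hhold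
    have h5 : S ^ (1+ρ) ≤ (EGP ^ α * H ^ (1-α)) ^ (1+ρ) :=
      Real.rpow_le_rpow hSpos.le hhold hρ1.le
    have h6 : (EGP ^ α * H ^ (1-α)) ^ (1+ρ) = EGP * H ^ ρ := by
      rw [Real.mul_rpow (Real.rpow_nonneg hEGPpos.le α) (Real.rpow_nonneg hHpos.le _),
        ← Real.rpow_mul hEGPpos.le, ← Real.rpow_mul hHpos.le, hα1, Real.rpow_one,
        show (1-α) * (1+ρ) = ρ by linear_combination (1+ρ) * h1mα + ρ * hα1]
    exact h5.trans_eq h6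
  -- conclude
  have hlogA : Real.log EGP ≤ (1+ρ) * Real.log S := by
    have := Real.log_le_log hEGPpos hA
    rwa [Real.log_rpow hSpos] at this
  have hlogB : (1+ρ) * Real.log S ≤ Real.log EGP + ρ * Real.log H := by
    have := Real.log_le_log (Real.rpow_pos_of_pos hSpos _) hB
    rwa [Real.log_rpow hSpos,
      Real.log_mul hEGPpos.ne' (Real.rpow_pos_of_pos hHpos _).ne',
      Real.log_rpow hHpos] at this
  have hgoal_eq : (1/ρ) * Real.log EG - (1/ρ) * Real.log EGP - Lalpha α P QG
      = ((1+ρ)/ρ) * Real.log S - (1/ρ) * Real.log EGP - Real.log H := by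
    rw [hLa]; ring
  rw [hgoal_eq]
  have hd1 : 0 ≤ ((1+ρ)/ρ) * Real.log S - (1/ρ) * Real.log EGP := by
    rw [div_mul_eq_mul_div, div_mul_eq_mul_div, div_sub_div_same, le_div_iff₀ hρ, zero_mul]
    linarith [hlogA]
  have hd2 : ((1+ρ)/ρ) * Real.log S - (1/ρ) * Real.log EGP ≤ Real.log H := by
    rw [div_mul_eq_mul_div, div_mul_eq_mul_div, div_sub_div_same, div_le_iff₀ hρ]
    linarith [hlogB]
  have hHlog0 : 0 ≤ Real.log H := Real.log_nonneg hH1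
  have hfin : Real.log H ≤ Real.log (1 + Real.log (Fintype.card X)) := Real.log_le_log hHpos hHle
  rw [abs_le]
  constructor
  · linarith
  · linarith
end

section
/- Fix α ∈ (0,1) and a PMF R on finite X with full support. For any r ∈ (0,∞], the L_α-ball B(R,r) = {P : L_α(P,R) < r} is a convex subset of the simplex of PMFs on X. -/
open Real Finset

/-- Reverse Hölder step: for `0 < α < 1` and `0 ≤ u ≤ s` pointwise,
`∑ u^α ≤ (∑ u * s^(α-1))^α * (∑ s^α)^(1-α)`. -/
lemma rev_holder_step {X : Type*} [Fintype X] {α : ℝ} (hα0 : 0 < α) (hα1 : α < 1)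
    (u s : X → ℝ) (hu : ∀ x, 0 ≤ u x) (hs : ∀ x, 0 ≤ s x) (hus : ∀ x, u x ≤ s x) :
    ∑ x, u x ^ α ≤ (∑ x, u x * s x ^ (α - 1)) ^ α * (∑ x, s x ^ α) ^ (1 - α) := by
  have h1α : 0 < 1 - α := by linarith
  have hpq : Real.HolderConjugate (1 / α) (1 / (1 - α)) := by
    refine Real.holderConjugate_iff.mpr ⟨one_lt_one_div hα0 hα1, ?_⟩
    rw [one_div, inv_inv, one_div, inv_inv]; ring
  have hfn : ∀ x, 0 ≤ (u x * s x ^ (α - 1)) ^ α :=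
    fun x => Real.rpow_nonneg (mul_nonneg (hu x) (Real.rpow_nonneg (hs x) _)) _
  have hgn : ∀ x, 0 ≤ ((s x ^ α) ^ (1 - α)) :=
    fun x => Real.rpow_nonneg (Real.rpow_nonneg (hs x) _) _
  have key := Real.inner_le_Lp_mul_Lq_of_nonneg (s := Finset.univ)
    (f := fun x => (u x * s x ^ (α - 1)) ^ α) (g := fun x => (s x ^ α) ^ (1 - α)) hpq
    (fun x _ => hfn x) (fun x _ => hgn x)
  have e1 : ∀ x : X, (u x * s x ^ (α - 1)) ^ α * (s x ^ α) ^ (1 - α) = u x ^ α := by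
    intro x
    rcases eq_or_lt_of_le (hs x) with h0 | h0
    · have hux : u x = 0 := le_antisymm (by rw [h0]; exact hus x) (hu x)
      simp [hux, ← h0, Real.zero_rpow hα0.ne']
    · have e2 : (u x * s x ^ (α - 1)) ^ α = u x ^ α * s x ^ ((α - 1) * α) := by
        rw [Real.mul_rpow (hu x) (Real.rpow_nonneg (hs x) _), ← Real.rpow_mul (hs x)]
      have e3 : (s x ^ α) ^ (1 - α) = s x ^ (α * (1 - α)) := by
        rw [← Real.rpow_mul (hs x)]
      rw [e2, e3, mul_assoc, ← Real.rpow_add h0,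
        show (α - 1) * α + α * (1 - α) = 0 from by ring, Real.rpow_zero, mul_one]
  have e4 : ∀ x : X, ((u x * s x ^ (α - 1)) ^ α) ^ (1 / α) = u x * s x ^ (α - 1) := by
    intro x
    rw [← Real.rpow_mul (mul_nonneg (hu x) (Real.rpow_nonneg (hs x) _)),
      mul_one_div_cancel hα0.ne', Real.rpow_one]
  have e5 : ∀ x : X, ((s x ^ α) ^ (1 - α)) ^ (1 / (1 - α)) = s x ^ α := by
    intro x
    rw [← Real.rpow_mul (Real.rpow_nonneg (hs x) _),
      mul_one_div_cancel h1α.ne', Real.rpow_one]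
  have e6 : (1 : ℝ) / (1 / α) = α := by rw [one_div_one_div]
  have e7 : (1 : ℝ) / (1 / (1 - α)) = 1 - α := by rw [one_div_one_div]
  calc ∑ x, u x ^ α = ∑ x, (u x * s x ^ (α - 1)) ^ α * (s x ^ α) ^ (1 - α) := by
        exact (Finset.sum_congr rfl fun x _ => e1 x).symm
    _ ≤ (∑ x, ((u x * s x ^ (α - 1)) ^ α) ^ (1 / α)) ^ (1 / (1 / α))
        * (∑ x, ((s x ^ α) ^ (1 - α)) ^ (1 / (1 - α))) ^ (1 / (1 / (1 - α))) := key
    _ = (∑ x, u x * s x ^ (α - 1)) ^ α * (∑ x, s x ^ α) ^ (1 - α) := by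
        rw [e6, e7, Finset.sum_congr rfl fun x _ => e4 x, Finset.sum_congr rfl fun x _ => e5 x]

/-- Superadditivity (reverse Minkowski) of `u ↦ (∑ u^α)^(1/α)` for `0 < α < 1`. -/
lemma rpow_sum_superadd {X : Type*} [Fintype X] {α : ℝ} (hα0 : 0 < α) (hα1 : α < 1)
    (u v : X → ℝ) (hu : ∀ x, 0 ≤ u x) (hv : ∀ x, 0 ≤ v x) :
    (∑ x, u x ^ α) ^ (1 / α) + (∑ x, v x ^ α) ^ (1 / α)
      ≤ (∑ x, (u x + v x) ^ α) ^ (1 / α) := by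
  have h1α : 0 < 1 - α := by linarith
  set s : X → ℝ := fun x => u x + v x with hsdef
  have hs : ∀ x, 0 ≤ s x := fun x => add_nonneg (hu x) (hv x)
  set T : ℝ := ∑ x, s x ^ α with hTdef
  set A : ℝ := ∑ x, u x * s x ^ (α - 1) with hAdef
  set B : ℝ := ∑ x, v x * s x ^ (α - 1) with hBdef
  have hT0 : 0 ≤ T := Finset.sum_nonneg fun x _ => Real.rpow_nonneg (hs x) _
  have hA0 : 0 ≤ A := Finset.sum_nonneg fun x _ => mul_nonneg (hu x) (Real.rpow_nonneg (hs x) _)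
  have hB0 : 0 ≤ B := Finset.sum_nonneg fun x _ => mul_nonneg (hv x) (Real.rpow_nonneg (hs x) _)
  have hAB : A + B = T := by
    rw [hAdef, hBdef, hTdef, ← Finset.sum_add_distrib]
    refine Finset.sum_congr rfl fun x _ => ?_
    rw [← add_mul]
    have h := Real.rpow_add' (hs x) (show (1 : ℝ) + (α - 1) ≠ 0 by simpa using hα0.ne')
    rw [Real.rpow_one, show (1 : ℝ) + (α - 1) = α from by ring] at h
    rw [h]
  have hu' : (∑ x, u x ^ α) ^ (1 / α) ≤ A * T ^ ((1 - α) / α) := by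
    have h := rev_holder_step hα0 hα1 u s hu hs (fun x => le_add_of_nonneg_right (hv x))
    have h2 : (∑ x, u x ^ α) ^ (1 / α) ≤ (A ^ α * T ^ (1 - α)) ^ (1 / α) :=
      Real.rpow_le_rpow (Finset.sum_nonneg fun x _ => Real.rpow_nonneg (hu x) _) h
        (by positivity)
    refine h2.trans_eq ?_
    rw [Real.mul_rpow (Real.rpow_nonneg hA0 _) (Real.rpow_nonneg hT0 _),
      ← Real.rpow_mul hA0, mul_one_div_cancel hα0.ne', Real.rpow_one,
      ← Real.rpow_mul hT0]
    ring_nf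
  have hv' : (∑ x, v x ^ α) ^ (1 / α) ≤ B * T ^ ((1 - α) / α) := by
    have h := rev_holder_step hα0 hα1 v s hv hs (fun x => le_add_of_nonneg_left (hu x))
    have h2 : (∑ x, v x ^ α) ^ (1 / α) ≤ (B ^ α * T ^ (1 - α)) ^ (1 / α) :=
      Real.rpow_le_rpow (Finset.sum_nonneg fun x _ => Real.rpow_nonneg (hv x) _) h
        (by positivity)
    refine h2.trans_eq ?_
    rw [Real.mul_rpow (Real.rpow_nonneg hB0 _) (Real.rpow_nonneg hT0 _),
      ← Real.rpow_mul hB0, mul_one_div_cancel hα0.ne', Real.rpow_one,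
      ← Real.rpow_mul hT0]
    ring_nf
  have final : A * T ^ ((1 - α) / α) + B * T ^ ((1 - α) / α) = T ^ (1 / α) := by
    rw [← add_mul, hAB]
    have : T * T ^ ((1 - α) / α) = T ^ (1 + (1 - α) / α) := by
      rw [Real.rpow_add' hT0 (by positivity : (1 : ℝ) + (1 - α) / α ≠ 0), Real.rpow_one]
    rw [this]
    congr 1
    field_simp
    ring
  calc (∑ x, u x ^ α) ^ (1 / α) + (∑ x, v x ^ α) ^ (1 / α)
      ≤ A * T ^ ((1 - α) / α) + B * T ^ ((1 - α) / α) := add_le_add hu' hv'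
    _ = T ^ (1 / α) := final

/-- the `L_α`-ball `B(R,r) = {P PMF : L_α(P,R) < r}` is convex,
for `α ∈ (0,1)`, a full-support PMF `R`, and any radius `r ∈ (0,∞]`. -/
theorem Lalpha_ball_convex
    {X : Type*} [Fintype X] [Nonempty X]
    (α : ℝ) (hα : 0 < α ∧ α < 1)
    (R : X → ℝ) (hR : IsPMF R) (hRpos : ∀ x, 0 < R x)
    (r : EReal) (hr : 0 < r) :
    Convex ℝ {P : X → ℝ | IsPMF P ∧ (Lalpha α P R : EReal) < r} := by
  obtain ⟨hα0, hα1⟩ := hα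
  have h1α : 0 < 1 - α := by linarith
  set c : X → ℝ := fun x => (∑ a, (R a / R x) ^ α) ^ ((1 - α) / α) with hc
  have hcpos : ∀ x, 0 < c x := by
    intro x
    exact Real.rpow_pos_of_pos (Finset.sum_pos
      (fun a _ => Real.rpow_pos_of_pos (div_pos (hRpos a) (hRpos x)) α) univ_nonempty) _
  -- positivity facts for PMFs
  have hex : ∀ P : X → ℝ, IsPMF P → ∃ x, 0 < P x := by
    intro P hP
    by_contra h
    push_neg at h
    have : ∑ x, P x = 0 := Finset.sum_eq_zero fun x _ => le_antisymm (h x) (hP.1 x)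
    rw [hP.2] at this; norm_num at this
  have hT : ∀ P : X → ℝ, IsPMF P → 0 < ∑ x, P x ^ α := by
    intro P hP
    obtain ⟨x0, hx0⟩ := hex P hP
    exact Finset.sum_pos' (fun x _ => Real.rpow_nonneg (hP.1 x) α)
      ⟨x0, Finset.mem_univ _, Real.rpow_pos_of_pos hx0 α⟩
  have hfpos : ∀ P : X → ℝ, IsPMF P → 0 < ∑ x, P x * c x := by
    intro P hP
    obtain ⟨x0, hx0⟩ := hex P hP
    exact Finset.sum_pos' (fun x _ => mul_nonneg (hP.1 x) (hcpos x).le)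
      ⟨x0, Finset.mem_univ _, mul_pos hx0 (hcpos x0)⟩
  -- the key characterization of the ball
  have hiff : ∀ P : X → ℝ, IsPMF P → ∀ s : ℝ,
      (Lalpha α P R < s ↔
        ∑ x, P x * c x < Real.exp ((1 - α) / α * s) * (∑ x, P x ^ α) ^ (1 / α)) := by
    intro P hP s
    have hfP := hfpos P hP
    have hTP := hT P hP
    have hKh : 0 < Real.exp ((1 - α) / α * s) * (∑ x, P x ^ α) ^ (1 / α) :=
      mul_pos (Real.exp_pos _) (Real.rpow_pos_of_pos hTP _)
    rw [← Real.log_lt_log_iff hfP hKh, Real.log_mul (Real.exp_pos _).ne' (Real.rpow_pos_of_pos hTP _).ne',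
      Real.log_exp, Real.log_rpow hTP]
    unfold Lalpha renyiH
    set A := Real.log (∑ x, P x * c x) with hA
    set B := Real.log (∑ x, P x ^ α) with hB
    have e1 : α / (1 - α) * A - 1 / (1 - α) * B = (α * A - B) / (1 - α) := by ring
    rw [e1, div_lt_iff₀ h1α, sub_lt_iff_lt_add, ← lt_div_iff₀' hα0,
      show (s * (1 - α) + B) / α = (1 - α) / α * s + 1 / α * B from by ring]
  -- scaling of the α-quasinorm
  have hscale : ∀ t : ℝ, 0 ≤ t → ∀ P : X → ℝ, (∀ x, 0 ≤ P x) →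
      (∑ x, (t * P x) ^ α) ^ (1 / α) = t * (∑ x, P x ^ α) ^ (1 / α) := by
    intro t ht P hPn
    have e1 : ∀ x : X, (t * P x) ^ α = t ^ α * P x ^ α :=
      fun x => Real.mul_rpow ht (hPn x)
    have e2 : (t ^ α) ^ (1 / α) = t := by
      rw [← Real.rpow_mul ht, mul_one_div_cancel hα0.ne', Real.rpow_one]
    rw [Finset.sum_congr rfl fun x _ => e1 x, ← Finset.mul_sum,
      Real.mul_rpow (Real.rpow_nonneg ht α)
        (Finset.sum_nonneg fun x _ => Real.rpow_nonneg (hPn x) α), e2]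
  -- main argument
  rintro P ⟨hPpmf, hPlt⟩ Q ⟨hQpmf, hQlt⟩ t u ht hu htu
  have hcombo : IsPMF (t • P + u • Q) := by
    constructor
    · intro x
      simpa using add_nonneg (mul_nonneg ht (hPpmf.1 x)) (mul_nonneg hu (hQpmf.1 x))
    · simp only [Pi.add_apply, Pi.smul_apply, smul_eq_mul]
      rw [Finset.sum_add_distrib, ← Finset.mul_sum, ← Finset.mul_sum, hPpmf.2, hQpmf.2]
      simpa using htu
  refine ⟨hcombo, ?_⟩
  induction r using EReal.rec with
  | bot => exact absurd hr (by simp)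
  | top => exact EReal.coe_lt_top _
  | coe s =>
    rw [EReal.coe_lt_coe_iff] at hPlt hQlt ⊢
    rw [hiff P hPpmf s] at hPlt
    rw [hiff Q hQpmf s] at hQlt
    rw [hiff _ hcombo s]
    set K := Real.exp ((1 - α) / α * s) with hK
    -- linearity of the numerator
    have hlin : ∑ x, (t • P + u • Q) x * c x
        = t * (∑ x, P x * c x) + u * (∑ x, Q x * c x) := by
      rw [Finset.mul_sum, Finset.mul_sum, ← Finset.sum_add_distrib]
      refine Finset.sum_congr rfl fun x _ => ?_
      simp only [Pi.add_apply, Pi.smul_apply, smul_eq_mul]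
      ring
    -- superadditivity of the denominator
    have hsup : t * (∑ x, P x ^ α) ^ (1 / α) + u * (∑ x, Q x ^ α) ^ (1 / α)
        ≤ (∑ x, ((t • P + u • Q) x) ^ α) ^ (1 / α) := by
      have h := rpow_sum_superadd hα0 hα1 (fun x => t * P x) (fun x => u * Q x)
        (fun x => mul_nonneg ht (hPpmf.1 x)) (fun x => mul_nonneg hu (hQpmf.1 x))
      rw [hscale t ht P hPpmf.1, hscale u hu Q hQpmf.1] at h
      exact h.trans_eq rfl
    -- strict combination
    have hstrict : t * (∑ x, P x * c x) + u * (∑ x, Q x * c x)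
        < K * (t * (∑ x, P x ^ α) ^ (1 / α) + u * (∑ x, Q x ^ α) ^ (1 / α)) := by
      rw [mul_add, ← mul_assoc, ← mul_assoc, mul_comm K t, mul_comm K u, mul_assoc, mul_assoc]
      rcases ht.eq_or_lt with h0 | h0
      · have hu1 : u = 1 := by linarith
        rw [← h0, hu1]
        simpa using hQlt
      · exact add_lt_add_of_lt_of_le (mul_lt_mul_of_pos_left hPlt h0)
          (mul_le_mul_of_nonneg_left hQlt.le hu)
    calc ∑ x, (t • P + u • Q) x * c x
        = t * (∑ x, P x * c x) + u * (∑ x, Q x * c x) := hlin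
      _ < K * (t * (∑ x, P x ^ α) ^ (1 / α) + u * (∑ x, Q x ^ α) ^ (1 / α)) := hstrict
      _ ≤ K * (∑ x, ((t • P + u • Q) x) ^ α) ^ (1 / α) :=
          mul_le_mul_of_nonneg_left hsup (Real.exp_pos _).le
end

section
/- Let α ∈ (0,1), E a closed convex set of PMFs on finite X, and R a PMF such that there exists P ∈ E with L_α(P,R) < ∞. Then there exists Q ∈ E attaining min_{P∈E} L_α(P,R) (the L_α-projection of R on E exists). -/
open Real Finset

open Classical in
/-- `L_α(P,Q)` as an extended real, equal to `+∞` when `supp P ⊄ supp Q`. -/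
noncomputable def Lext {X : Type*} [Fintype X] (α : ℝ) (P Q : X → ℝ) : EReal :=
  if ∀ x, Q x = 0 → P x = 0 then ((Lalpha α P Q : ℝ) : EReal) else ⊤

/-- existence of the `L_α`-projection: if `E` is a closed convex
set of PMFs intersecting `B(R,∞)`, then some `Q ∈ E` attains
`min_{P ∈ E} L_α(P,R)`. -/
theorem Lalpha_projection_exists
    {X : Type*} [Fintype X] [Nonempty X]
    (α : ℝ) (hα : 0 < α ∧ α < 1)
    (E : Set (X → ℝ)) (hEclosed : IsClosed E) (hEconvex : Convex ℝ E)
    (hEpmf : ∀ P ∈ E, IsPMF P)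
    (R : X → ℝ) (hR : IsPMF R)
    (hinter : ∃ P ∈ E, Lext α P R < ⊤) :
    ∃ Q ∈ E, ∀ P ∈ E, Lext α Q R ≤ Lext α P R := by
  classical
  obtain ⟨hα0, hα1⟩ := hα
  set c : X → ℝ := fun x => (∑ a, (R a / R x) ^ α) ^ ((1 - α) / α) with hc
  set E' : Set (X → ℝ) := E ∩ {P | ∀ x, R x = 0 → P x = 0} with hE'
  -- E' is closed
  have hclosed2 : IsClosed {P : X → ℝ | ∀ x, R x = 0 → P x = 0} := by
    have : {P : X → ℝ | ∀ x, R x = 0 → P x = 0}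
        = ⋂ x, {P : X → ℝ | R x = 0 → P x = 0} := by
      ext P; simp [Set.mem_iInter]
    rw [this]
    refine isClosed_iInter fun x => ?_
    by_cases hx : R x = 0
    · have : {P : X → ℝ | R x = 0 → P x = 0} = {P : X → ℝ | P x = 0} := by
        ext P; simp [hx]
      rw [this]
      exact isClosed_eq (continuous_apply x) continuous_const
    · have : {P : X → ℝ | R x = 0 → P x = 0} = Set.univ := by
        ext P; simp [hx]
      rw [this]; exact isClosed_univ
  have hE'closed : IsClosed E' := hEclosed.inter hclosed2
  -- E' is nonempty
  obtain ⟨P0, hP0E, hP0fin⟩ := hinter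
  have hP0supp : ∀ x, R x = 0 → P0 x = 0 := by
    by_contra h
    rw [Lext, if_neg h] at hP0fin
    exact lt_irrefl _ hP0fin
  have hE'ne : E'.Nonempty := ⟨P0, hP0E, hP0supp⟩
  -- E' is compact
  have hE'sub : E' ⊆ Set.Icc (0 : X → ℝ) 1 := by
    intro P hP
    obtain ⟨hPnn, hPsum⟩ := hEpmf P hP.1
    constructor
    · intro x; exact hPnn x
    · intro x
      have : P x ≤ ∑ y, P y :=
        Finset.single_le_sum (fun y _ => hPnn y) (Finset.mem_univ x)
      simpa [hPsum] using this
  have hE'cpt : IsCompact E' := isCompact_Icc.of_isClosed_subset hE'closed hE'sub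
  -- positivity of the two sums on E'
  have hexpos : ∀ P ∈ E', ∃ x, 0 < P x := by
    intro P hP
    obtain ⟨hPnn, hPsum⟩ := hEpmf P hP.1
    by_contra h
    push_neg at h
    have : ∑ x, P x ≤ 0 := Finset.sum_nonpos fun x _ => h x
    linarith
  have hcnn : ∀ x, 0 ≤ c x := fun x =>
    Real.rpow_nonneg (Finset.sum_nonneg fun a _ =>
      Real.rpow_nonneg (div_nonneg (hR.1 a) (hR.1 x)) α) _
  have hf_pos : ∀ P ∈ E', 0 < ∑ x, P x * c x := by
    intro P hP
    obtain ⟨x, hx⟩ := hexpos P hP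
    have hRx : 0 < R x := by
      rcases (hR.1 x).lt_or_eq with h | h
      · exact h
      · exact absurd (hP.2 x h.symm) (ne_of_gt hx)
    have hcx : 0 < c x := by
      apply Real.rpow_pos_of_pos
      apply Finset.sum_pos' (fun a _ =>
        Real.rpow_nonneg (div_nonneg (hR.1 a) (hR.1 x)) α)
      exact ⟨x, Finset.mem_univ x, by
        rw [div_self (ne_of_gt hRx), Real.one_rpow]; norm_num⟩
    apply Finset.sum_pos' (fun a _ => mul_nonneg ((hEpmf P hP.1).1 a) (hcnn a))
    exact ⟨x, Finset.mem_univ x, mul_pos hx hcx⟩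
  have hg_pos : ∀ P ∈ E', 0 < ∑ x, P x ^ α := by
    intro P hP
    obtain ⟨x, hx⟩ := hexpos P hP
    apply Finset.sum_pos' (fun a _ => Real.rpow_nonneg ((hEpmf P hP.1).1 a) α)
    exact ⟨x, Finset.mem_univ x, Real.rpow_pos_of_pos hx α⟩
  -- continuity
  have hfcont : Continuous fun P : X → ℝ => ∑ x, P x * c x :=
    continuous_finset_sum _ fun x _ => (continuous_apply x).mul continuous_const
  have hgcont : Continuous fun P : X → ℝ => ∑ x, P x ^ α := by
    refine continuous_finset_sum _ fun x _ => ?_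
    have h1 : Continuous fun t : ℝ => t ^ α :=
      continuous_iff_continuousAt.mpr fun t =>
        Real.continuousAt_rpow_const t α (Or.inr hα0.le)
    exact h1.comp (continuous_apply x)
  have hcont : ContinuousOn (fun P => Lalpha α P R) E' := by
    intro P hP
    apply ContinuousWithinAt.sub
    · exact (ContinuousAt.mul continuousAt_const
        (hfcont.continuousAt.log (ne_of_gt (hf_pos P hP)))).continuousWithinAt
    · exact (ContinuousAt.mul continuousAt_const
        (hgcont.continuousAt.log (ne_of_gt (hg_pos P hP)))).continuousWithinAt
  obtain ⟨Q, hQE', hQmin⟩ := hE'cpt.exists_isMinOn hE'ne hcont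
  refine ⟨Q, hQE'.1, fun P hPE => ?_⟩
  have hQs : ∀ x, R x = 0 → Q x = 0 := hQE'.2
  rw [Lext, if_pos hQs]
  by_cases hPs : ∀ x, R x = 0 → P x = 0
  · rw [Lext, if_pos hPs]
    exact_mod_cast hQmin ⟨hPE, hPs⟩
  · rw [Lext, if_neg hPs]
    exact le_top
end

section
/- Let α ∈ (0,1) and P, Q, R be PMFs on finite X with L_α(P,R) and L_α(Q,R) finite. If L_α(λP + (1−λ)Q, R) ≥ L_α(Q,R) for all λ ∈ [0,1], then L_α(P,R) ≥ L_α(P,Q) + L_α(Q,R). Conversely, if L_α(P,R) ≥ L_α(P,Q) + L_α(Q,R) with all three quantities finite, then L_α(λP + (1−λ)Q, R) ≥ L_α(Q,R) for all λ ∈ [0,1]. -/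
open Real Finset

open Topology Filter

section Aux
variable {X : Type*} [Fintype X] {α : ℝ}

lemma exists_pos {P : X → ℝ} (hP : IsPMF P) : ∃ x, 0 < P x := by
  by_contra h
  push_neg at h
  have : ∑ x, P x ≤ 0 := Finset.sum_nonpos fun x _ => h x
  rw [hP.2] at this; linarith

lemma sum_rpow_pos (hα : 0 < α) {P : X → ℝ} (hP : IsPMF P) :
    0 < ∑ x, P x ^ α := by
  obtain ⟨x, hx⟩ := exists_pos hP
  exact Finset.sum_pos' (fun y _ => Real.rpow_nonneg (hP.1 y) α)
    ⟨x, Finset.mem_univ x, Real.rpow_pos_of_pos hx α⟩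

lemma A_nonneg {P R : X → ℝ} (hP : ∀ x, 0 ≤ P x) (hR : ∀ x, 0 ≤ R x) :
    0 ≤ ∑ x, P x * R x ^ (α - 1) :=
  Finset.sum_nonneg fun x _ => mul_nonneg (hP x) (Real.rpow_nonneg (hR x) _)

lemma A_pos {P R : X → ℝ} (hP : IsPMF P) (hR : ∀ x, 0 ≤ R x)
    (hsupp : ∀ x, R x = 0 → P x = 0) :
    0 < ∑ x, P x * R x ^ (α - 1) := by
  obtain ⟨x, hx⟩ := exists_pos hP
  have hRx : 0 < R x := by
    rcases eq_or_lt_of_le (hR x) with h | h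
    · exact absurd (hsupp x h.symm) (by linarith)
    · exact h
  exact Finset.sum_pos' (fun y _ => mul_nonneg (hP.1 y) (Real.rpow_nonneg (hR y) _))
    ⟨x, Finset.mem_univ x, mul_pos hx (Real.rpow_pos_of_pos hRx _)⟩

lemma sum_self_rpow {Q : X → ℝ} (hα : 0 < α) (hα1 : α < 1) (hQ : ∀ x, 0 ≤ Q x) :
    ∑ x, Q x * Q x ^ (α - 1) = ∑ x, Q x ^ α := by
  refine Finset.sum_congr rfl fun x _ => ?_
  rcases eq_or_lt_of_le (hQ x) with h | h
  · rw [← h, Real.zero_rpow (by linarith), Real.zero_rpow (by linarith), mul_zero]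
  · have e : Q x ^ (1:ℝ) * Q x ^ (α-1) = Q x ^ ((1:ℝ)+(α-1)) := (Real.rpow_add h 1 (α-1)).symm
    rw [Real.rpow_one] at e
    rw [e]
    norm_num

lemma Lalpha_eq (hα0 : 0 < α) (hα1 : α < 1) {S R : X → ℝ}
    (hS : IsPMF S) (hR : IsPMF R) (hsupp : ∀ x, R x = 0 → S x = 0) :
    Lalpha α S R = Real.log (∑ x, R x ^ α)
      + (α / (1 - α)) * Real.log (∑ x, S x * R x ^ (α - 1))
      - (1 / (1 - α)) * Real.log (∑ x, S x ^ α) := by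
  have hα1' : (0:ℝ) < 1 - α := by linarith
  have hRpos : 0 < ∑ x, R x ^ α := sum_rpow_pos hα0 hR
  have hApos : 0 < ∑ x, S x * R x ^ (α - 1) := A_pos hS hR.1 hsupp
  have key : ∀ x, S x * (∑ a, (R a / R x) ^ α) ^ ((1 - α) / α)
      = ((∑ a, R a ^ α) ^ ((1 - α) / α)) * (S x * R x ^ (α - 1)) := by
    intro x
    rcases eq_or_lt_of_le (hR.1 x) with h | h
    · rw [hsupp x h.symm]; simp
    · have e1 : ∀ a, (R a / R x) ^ α = R a ^ α / R x ^ α := fun a =>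
        Real.div_rpow (hR.1 a) (hR.1 x) α
      simp only [e1, ← Finset.sum_div]
      rw [Real.div_rpow (le_of_lt hRpos) (Real.rpow_nonneg (hR.1 x) α)]
      rw [← Real.rpow_mul (hR.1 x)]
      have e2 : α * ((1 - α) / α) = 1 - α := by field_simp
      rw [e2]
      have e3 : R x ^ (α - 1) = (R x ^ (1 - α))⁻¹ := by
        rw [← Real.rpow_neg (hR.1 x)]; ring_nf
      rw [e3]; field_simp
  rw [Lalpha, renyiH]
  simp only [key, ← Finset.mul_sum]
  rw [Real.log_mul (by positivity) (by positivity), Real.log_rpow hRpos]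
  have e4 : α / (1 - α) * ((1 - α) / α * Real.log (∑ a, R a ^ α)) =
      Real.log (∑ a, R a ^ α) := by
    rw [← mul_assoc]
    have : α / (1 - α) * ((1 - α) / α) = 1 := by field_simp
    rw [this, one_mul]
  rw [mul_add, e4]

lemma holder (hα0 : 0 < α) (hα1 : α < 1) {u v : X → ℝ}
    (hu : ∀ x, 0 ≤ u x) (hv : ∀ x, 0 ≤ v x)
    (hU : 0 < ∑ x, u x) (hV : 0 < ∑ x, v x) :
    ∑ x, u x ^ α * v x ^ (1 - α) ≤ (∑ x, u x) ^ α * (∑ x, v x) ^ (1 - α) := by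
  set U := ∑ x, u x with hU'
  set V := ∑ x, v x with hV'
  have hCpos : 0 < U ^ α * V ^ (1 - α) := by positivity
  have key : ∀ x ∈ Finset.univ, u x ^ α * v x ^ (1 - α) ≤
      (U ^ α * V ^ (1 - α)) * (α * (u x / U) + (1 - α) * (v x / V)) := by
    intro x _
    have h := Real.geom_mean_le_arith_mean2_weighted hα0.le
      (show (0:ℝ) ≤ 1 - α by linarith)
      (div_nonneg (hu x) hU.le) (div_nonneg (hv x) hV.le)
      (show α + (1 - α) = 1 by ring)
    have e : (u x / U) ^ α * (v x / V) ^ (1 - α)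
        = (u x ^ α * v x ^ (1 - α)) / (U ^ α * V ^ (1 - α)) := by
      rw [Real.div_rpow (hu x) hU.le, Real.div_rpow (hv x) hV.le]
      ring
    rw [e, div_le_iff₀ hCpos] at h
    linarith [h]
  calc ∑ x, u x ^ α * v x ^ (1 - α)
      ≤ ∑ x, (U ^ α * V ^ (1 - α)) * (α * (u x / U) + (1 - α) * (v x / V)) :=
        Finset.sum_le_sum key
    _ = U ^ α * V ^ (1 - α) := by
        rw [← Finset.mul_sum]
        have : ∑ x, (α * (u x / U) + (1 - α) * (v x / V)) = 1 := by
          rw [Finset.sum_add_distrib, ← Finset.mul_sum, ← Finset.mul_sum,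
            ← Finset.sum_div, ← Finset.sum_div, ← hU', ← hV',
            div_self hU.ne', div_self hV.ne']
          ring
        rw [this, mul_one]

lemma Lalpha_le_iff (hα0 : 0 < α) (hα1 : α < 1) {S Q R : X → ℝ}
    (hS : IsPMF S) (hQ : IsPMF Q) (hR : IsPMF R)
    (hSsupp : ∀ x, R x = 0 → S x = 0) (hQsupp : ∀ x, R x = 0 → Q x = 0) :
    Lalpha α Q R ≤ Lalpha α S R ↔
      (∑ x, Q x * R x ^ (α - 1)) ^ α * (∑ x, S x ^ α)
        ≤ (∑ x, S x * R x ^ (α - 1)) ^ α * (∑ x, Q x ^ α) := by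
  have hα1' : (0:ℝ) < 1 - α := by linarith
  have hAS : 0 < ∑ x, S x * R x ^ (α - 1) := A_pos hS hR.1 hSsupp
  have hAQ : 0 < ∑ x, Q x * R x ^ (α - 1) := A_pos hQ hR.1 hQsupp
  have hcS : 0 < ∑ x, S x ^ α := sum_rpow_pos hα0 hS
  have hcQ : 0 < ∑ x, Q x ^ α := sum_rpow_pos hα0 hQ
  have e1 : Lalpha α S R - Lalpha α Q R = (1 - α)⁻¹ *
      (Real.log ((∑ x, S x * R x ^ (α - 1)) ^ α * (∑ x, Q x ^ α))
        - Real.log ((∑ x, Q x * R x ^ (α - 1)) ^ α * (∑ x, S x ^ α))) := by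
    rw [Lalpha_eq hα0 hα1 hS hR hSsupp, Lalpha_eq hα0 hα1 hQ hR hQsupp,
      Real.log_mul (by positivity) hcQ.ne', Real.log_mul (by positivity) hcS.ne',
      Real.log_rpow hAS, Real.log_rpow hAQ]
    field_simp
    ring
  rw [← sub_nonneg, e1]
  rw [mul_nonneg_iff_of_pos_left (by positivity : (0:ℝ) < (1-α)⁻¹)]
  rw [sub_nonneg]
  exact Real.log_le_log_iff (by positivity) (by positivity)

lemma pyth_iff (hα0 : 0 < α) (hα1 : α < 1) {P Q R : X → ℝ}
    (hP : IsPMF P) (hQ : IsPMF Q) (hR : IsPMF R)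
    (hPR : ∀ x, R x = 0 → P x = 0) (hQR : ∀ x, R x = 0 → Q x = 0)
    (hPQ : ∀ x, Q x = 0 → P x = 0) :
    Lalpha α P Q + Lalpha α Q R ≤ Lalpha α P R ↔
      (∑ x, Q x * R x ^ (α - 1)) * (∑ x, P x * Q x ^ (α - 1))
        ≤ (∑ x, P x * R x ^ (α - 1)) * (∑ x, Q x ^ α) := by
  have hα1' : (0:ℝ) < 1 - α := by linarith
  have ha : 0 < ∑ x, P x * R x ^ (α - 1) := A_pos hP hR.1 hPR
  have hb : 0 < ∑ x, Q x * R x ^ (α - 1) := A_pos hQ hR.1 hQR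
  have hd : 0 < ∑ x, P x * Q x ^ (α - 1) := A_pos hP hQ.1 hPQ
  have hc : 0 < ∑ x, Q x ^ α := sum_rpow_pos hα0 hQ
  have e2 : Lalpha α P R - Lalpha α P Q - Lalpha α Q R = (α / (1 - α)) *
      (Real.log ((∑ x, P x * R x ^ (α - 1)) * (∑ x, Q x ^ α))
        - Real.log ((∑ x, Q x * R x ^ (α - 1)) * (∑ x, P x * Q x ^ (α - 1)))) := by
    rw [Lalpha_eq hα0 hα1 hP hR hPR, Lalpha_eq hα0 hα1 hP hQ hPQ,
      Lalpha_eq hα0 hα1 hQ hR hQR,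
      Real.log_mul ha.ne' hc.ne', Real.log_mul hb.ne' hd.ne']
    field_simp
    ring
  constructor
  · intro h
    have h2 : 0 ≤ Lalpha α P R - Lalpha α P Q - Lalpha α Q R := by linarith
    rw [e2, mul_nonneg_iff_of_pos_left (by positivity : (0:ℝ) < α/(1-α)), sub_nonneg,
      Real.log_le_log_iff (by positivity) (by positivity)] at h2
    exact h2
  · intro h
    have h2 : 0 ≤ Lalpha α P R - Lalpha α P Q - Lalpha α Q R := by
      rw [e2, mul_nonneg_iff_of_pos_left (by positivity : (0:ℝ) < α/(1-α)), sub_nonneg,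
        Real.log_le_log_iff (by positivity) (by positivity)]
      exact h
    linarith

lemma sum_affine (f g w : X → ℝ) (t : ℝ) :
    ∑ x, (t * f x + (1 - t) * g x) * w x
      = t * (∑ x, f x * w x) + (1 - t) * (∑ x, g x * w x) := by
  rw [Finset.mul_sum, Finset.mul_sum, ← Finset.sum_add_distrib]
  exact Finset.sum_congr rfl fun x _ => by ring

lemma mix_isPMF {P Q : X → ℝ} (hP : IsPMF P) (hQ : IsPMF Q) {t : ℝ}
    (ht0 : 0 ≤ t) (ht1 : t ≤ 1) : IsPMF (fun x => t * P x + (1 - t) * Q x) := by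
  constructor
  · intro x
    have h1 := hP.1 x; have h2 := hQ.1 x
    dsimp only
    nlinarith
  · rw [Finset.sum_add_distrib, ← Finset.mul_sum, ← Finset.mul_sum, hP.2, hQ.2]
    ring

lemma mix_rpow_eq (hα0 : 0 < α) (hα1 : α < 1) {P Q : X → ℝ}
    (hP : ∀ x, 0 ≤ P x)
    (hQ : ∀ x, 0 ≤ Q x) (hPQ : ∀ x, Q x = 0 → P x = 0) {t : ℝ}
    (ht0 : 0 ≤ t) (ht1 : t ≤ 1) (x : X) :
    (t * P x + (1 - t) * Q x) ^ α
      = ((t * P x + (1 - t) * Q x) * Q x ^ (α - 1)) ^ α * (Q x ^ α) ^ (1 - α) := by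
  rcases eq_or_lt_of_le (hQ x) with h | h
  · rw [hPQ x h.symm, ← h]
    norm_num [Real.zero_rpow hα0.ne', Real.zero_rpow (show α - 1 ≠ 0 by linarith)]
  · have hm : 0 ≤ t * P x + (1 - t) * Q x := by nlinarith [hP x, hQ x]
    rw [Real.mul_rpow hm (Real.rpow_nonneg (hQ x) _), ← Real.rpow_mul h.le,
      ← Real.rpow_mul h.le, mul_assoc, ← Real.rpow_add h]
    have : (α - 1) * α + α * (1 - α) = 0 := by ring
    rw [this, Real.rpow_zero, mul_one]

lemma dir2_core (hα0 : 0 < α) (hα1 : α < 1) {P Q R : X → ℝ}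
    (hP : IsPMF P) (hQ : IsPMF Q) (hR : IsPMF R)
    (hQR : ∀ x, R x = 0 → Q x = 0) (hPQ : ∀ x, Q x = 0 → P x = 0)
    {t : ℝ} (ht0 : 0 ≤ t) (ht1 : t ≤ 1)
    (hkey : (∑ x, Q x * R x ^ (α - 1)) * (∑ x, P x * Q x ^ (α - 1))
        ≤ (∑ x, P x * R x ^ (α - 1)) * (∑ x, Q x ^ α)) :
    (∑ x, Q x * R x ^ (α - 1)) ^ α * (∑ x, (t * P x + (1 - t) * Q x) ^ α)
      ≤ (∑ x, (t * P x + (1 - t) * Q x) * R x ^ (α - 1)) ^ α * (∑ x, Q x ^ α) := by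
  set a := ∑ x, P x * R x ^ (α - 1) with ha'
  set b := ∑ x, Q x * R x ^ (α - 1) with hb'
  set c := ∑ x, Q x ^ α with hc'
  set d := ∑ x, P x * Q x ^ (α - 1) with hd'
  have hb : 0 < b := A_pos hQ hR.1 hQR
  have hc : 0 < c := sum_rpow_pos hα0 hQ
  have hd : 0 < d := A_pos hP hQ.1 hPQ
  have hU : 0 < t * d + (1 - t) * c := by
    rcases eq_or_lt_of_le ht1 with h | h
    · rw [h]; simpa using hd
    · nlinarith [mul_nonneg ht0 hd.le]
  -- the mixture sums
  have hsum_r : ∑ x, (t * P x + (1 - t) * Q x) * R x ^ (α - 1) = t * a + (1 - t) * b :=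
    sum_affine P Q _ t
  have hsum_q : ∑ x, (t * P x + (1 - t) * Q x) * Q x ^ (α - 1) = t * d + (1 - t) * c := by
    rw [sum_affine, sum_self_rpow hα0 hα1 hQ.1]
  -- Hölder
  have hh := holder hα0 hα1 (u := fun x => (t * P x + (1 - t) * Q x) * Q x ^ (α - 1))
    (v := fun x => Q x ^ α)
    (fun x => mul_nonneg ((mix_isPMF hP hQ ht0 ht1).1 x) (Real.rpow_nonneg (hQ.1 x) _))
    (fun x => Real.rpow_nonneg (hQ.1 x) _)
    (by rw [hsum_q]; exact hU) (by rw [← hc']; exact hc)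
  rw [hsum_q] at hh
  have hS : ∑ x, (t * P x + (1 - t) * Q x) ^ α ≤ (t * d + (1 - t) * c) ^ α * c ^ (1 - α) := by
    calc ∑ x, (t * P x + (1 - t) * Q x) ^ α
        = ∑ x, ((t * P x + (1 - t) * Q x) * Q x ^ (α - 1)) ^ α * (Q x ^ α) ^ (1 - α) :=
          Finset.sum_congr rfl fun x _ => mix_rpow_eq hα0 hα1 hP.1 hQ.1 hPQ ht0 ht1 x
      _ ≤ (t * d + (1 - t) * c) ^ α * c ^ (1 - α) := hh
  rw [hsum_r]
  have hAm : 0 < t * a + (1 - t) * b := by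
    have ha : 0 < a := A_pos hP hR.1 (fun x hx => hPQ x (hQR x hx))
    rcases eq_or_lt_of_le ht1 with h | h
    · rw [h]; simpa using ha
    · nlinarith [mul_nonneg ht0 ha.le]
  calc b ^ α * ∑ x, (t * P x + (1 - t) * Q x) ^ α
      ≤ b ^ α * ((t * d + (1 - t) * c) ^ α * c ^ (1 - α)) := by
        have : (0:ℝ) ≤ b ^ α := Real.rpow_nonneg hb.le α
        nlinarith [hS]
    _ = (b * (t * d + (1 - t) * c)) ^ α * c ^ (1 - α) := by
        rw [Real.mul_rpow hb.le hU.le]; ring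
    _ ≤ ((t * a + (1 - t) * b) * c) ^ α * c ^ (1 - α) := by
        have hineq : b * (t * d + (1 - t) * c) ≤ (t * a + (1 - t) * b) * c := by
          nlinarith [mul_le_mul_of_nonneg_left hkey ht0]
        have := Real.rpow_le_rpow (by positivity) hineq hα0.le
        have hcnn : (0:ℝ) ≤ c ^ (1 - α) := Real.rpow_nonneg hc.le _
        nlinarith
    _ = (t * a + (1 - t) * b) ^ α * c := by
        rw [Real.mul_rpow hAm.le hc.le, mul_assoc, ← Real.rpow_add hc]
        norm_num

lemma dir1_core (hα0 : 0 < α) (hα1 : α < 1) {P Q R : X → ℝ}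
    (hP : IsPMF P) (hQ : IsPMF Q) (hR : IsPMF R)
    (hPR : ∀ x, R x = 0 → P x = 0) (hQR : ∀ x, R x = 0 → Q x = 0)
    (hPQ : ∀ x, Q x = 0 → P x = 0)
    (hseg : ∀ t ∈ Set.Ioc (0:ℝ) 1,
      Lalpha α Q R ≤ Lalpha α (fun x => t * P x + (1 - t) * Q x) R) :
    (∑ x, Q x * R x ^ (α - 1)) * (∑ x, P x * Q x ^ (α - 1))
      ≤ (∑ x, P x * R x ^ (α - 1)) * (∑ x, Q x ^ α) := by
  set a := ∑ x, P x * R x ^ (α - 1) with ha'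
  set b := ∑ x, Q x * R x ^ (α - 1) with hb'
  set c := ∑ x, Q x ^ α with hc'
  set d := ∑ x, P x * Q x ^ (α - 1) with hd'
  have hb : 0 < b := A_pos hQ hR.1 hQR
  have hc : 0 < c := sum_rpow_pos hα0 hQ
  set φ : ℝ → ℝ := fun t => (t * a + (1 - t) * b) ^ α * c
      - b ^ α * ∑ x, (t * P x + (1 - t) * Q x) ^ α with hφ'
  have hφnn : ∀ t ∈ Set.Ioc (0:ℝ) 1, 0 ≤ φ t := by
    intro t ht
    have h := (Lalpha_le_iff hα0 hα1 (mix_isPMF hP hQ ht.1.le ht.2) hQ hR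
      (fun x hx => by rw [hPR x hx, hQR x hx]; ring) hQR).mp (hseg t ht)
    rw [sum_affine] at h
    rw [hφ']
    dsimp only
    linarith
  have hφ0 : φ 0 = 0 := by
    rw [hφ']
    dsimp only
    norm_num
    try rw [← hc']
    try ring
  -- derivative of φ at 0
  have hinner : HasDerivAt (fun t : ℝ => t * a + (1 - t) * b) (a - b) 0 := by
    have := ((hasDerivAt_id (0:ℝ)).mul_const a).add
      (((hasDerivAt_const (0:ℝ) (1:ℝ)).sub (hasDerivAt_id 0)).mul_const b)
    rw [show a - b = 1 * a + (0 - 1) * b by ring]; exact this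
  have h1 : HasDerivAt (fun t : ℝ => (t * a + (1 - t) * b) ^ α)
      (α * b ^ (α - 1) * (a - b)) 0 := by
    have h := hinner.rpow_const (p := α) (Or.inl (by norm_num [hb.ne']))
    convert h using 1
    norm_num
    ring
  have hterm : ∀ x, HasDerivAt (fun t : ℝ => (t * P x + (1 - t) * Q x) ^ α)
      (α * Q x ^ (α - 1) * (P x - Q x)) 0 := by
    intro x
    rcases eq_or_lt_of_le (hQ.1 x) with h | h
    · have hPx := hPQ x h.symm
      have he : (fun t : ℝ => (t * P x + (1 - t) * Q x) ^ α) = fun _ => (0:ℝ) := by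
        funext t
        rw [hPx, ← h]
        norm_num [Real.zero_rpow hα0.ne']
      rw [he, ← h, Real.zero_rpow (show α - 1 ≠ 0 by linarith)]
      simpa using hasDerivAt_const (0:ℝ) (0:ℝ)
    · have hin : HasDerivAt (fun t : ℝ => t * P x + (1 - t) * Q x) (P x - Q x) 0 := by
        have := ((hasDerivAt_id (0:ℝ)).mul_const (P x)).add
          (((hasDerivAt_const (0:ℝ) (1:ℝ)).sub (hasDerivAt_id 0)).mul_const (Q x))
        rw [show P x - Q x = 1 * P x + (0 - 1) * Q x by ring]; exact this
      have hh := hin.rpow_const (p := α) (Or.inl (by norm_num [h.ne']))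
      convert hh using 1
      norm_num
      try ring
  have hsum : HasDerivAt (fun t : ℝ => ∑ x, (t * P x + (1 - t) * Q x) ^ α)
      (∑ x, α * Q x ^ (α - 1) * (P x - Q x)) 0 :=
    HasDerivAt.fun_sum (fun x _ => hterm x)
  have hφD : HasDerivAt φ
      ((α * b ^ (α - 1) * (a - b)) * c - b ^ α * ∑ x, α * Q x ^ (α - 1) * (P x - Q x)) 0 :=
    (h1.mul_const c).sub (hsum.const_mul (b ^ α))
  -- the sum in the derivative
  have hsum_eq : ∑ x, α * Q x ^ (α - 1) * (P x - Q x) = α * (d - c) := by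
    rw [hd', hc', ← sum_self_rpow hα0 hα1 hQ.1 (α := α), ← Finset.sum_sub_distrib,
      Finset.mul_sum]
    exact Finset.sum_congr rfl fun x _ => by ring
  rw [hsum_eq] at hφD
  -- nonnegative derivative from one-sided minimality
  have hD : 0 ≤ (α * b ^ (α - 1) * (a - b)) * c - b ^ α * (α * (d - c)) := by
    have hslope := hasDerivAt_iff_tendsto_slope.mp hφD
    have hmono : 𝓝[>] (0:ℝ) ≤ 𝓝[≠] (0:ℝ) :=
      nhdsWithin_mono 0 (fun x hx => Set.mem_compl_singleton_iff.mpr (ne_of_gt hx))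
    refine ge_of_tendsto (hslope.mono_left hmono) ?_
    filter_upwards [Ioc_mem_nhdsGT_of_mem (Set.mem_Ico.mpr ⟨le_refl (0:ℝ), zero_lt_one⟩)]
      with t ht
    rw [slope_def_field, hφ0, sub_zero, sub_zero]
    exact div_nonneg (hφnn t ht) ht.1.le
  -- conclude
  have hba : b ^ α = b ^ (α - 1) * b := by
    nth_rewrite 1 [show α = α - 1 + 1 by ring]
    rw [Real.rpow_add hb, Real.rpow_one]
  have h2 : 0 ≤ α * b ^ (α - 1) * (a * c - b * d) := by
    have : α * b ^ (α - 1) * (a * c - b * d)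
        = (α * b ^ (α - 1) * (a - b)) * c - (b ^ (α - 1) * b) * (α * (d - c)) := by ring
    rw [this, ← hba]
    exact hD
  have hpos : 0 < α * b ^ (α - 1) := mul_pos hα0 (Real.rpow_pos_of_pos hb _)
  have h4 : 0 ≤ a * c - b * d := (mul_nonneg_iff_of_pos_left hpos).mp h2
  linarith


lemma key_numeric (hα0 : 0 < α) (hα1 : α < 1) {a b c s : ℝ}
    (ha : 0 < a) (hb : 0 < b) (hc : 0 < c) (hs : 0 < s) :
    ∃ t : ℝ, 0 < t ∧ t ≤ 1 ∧
      (t * a + (1 - t) * b) ^ α * c < b ^ α * (t ^ α * s + (1 - t) * c) := by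
  set M := α * a * b ^ (α - 1) with hM'
  have hM : 0 < M := by rw [hM']; positivity
  clear_value M
  set N := M * c + b ^ α * c with hN'
  have hN : 0 < N := by rw [hN']; positivity
  set T := s * b ^ α with hT'
  have hT : 0 < T := by rw [hT']; positivity
  set K := T / N with hK'
  have hK : 0 < K := by rw [hK']; positivity
  clear_value K
  set t := min (1/2 : ℝ) ((K/2) ^ ((1-α)⁻¹)) with ht'
  have ht0 : 0 < t := lt_min (by norm_num) (Real.rpow_pos_of_pos (by positivity) _)
  have ht2 : t ≤ 1/2 := min_le_left _ _
  have h2 : t ≤ (K/2) ^ ((1-α)⁻¹) := min_le_right _ _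
  clear_value t
  have ht1 : t ≤ 1 := by linarith
  have ht1' : (0:ℝ) < 1 - t := by linarith
  refine ⟨t, ht0, ht1, ?_⟩
  -- key numeric fact : t * N < t ^ α * T
  have htK : t ^ (1 - α) * N < T := by
    have h1 : t ^ (1 - α) ≤ K / 2 := by
      have h3 := Real.rpow_le_rpow ht0.le h2 (by linarith : (0:ℝ) ≤ 1 - α)
      rwa [← Real.rpow_mul (by positivity), inv_mul_cancel₀ (by linarith : (1:ℝ) - α ≠ 0),
        Real.rpow_one] at h3
    have h4 : K / 2 * N = T / 2 := by
      rw [hK']; field_simp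
    nlinarith [mul_le_mul_of_nonneg_right h1 hN.le]
  have htN : t * N < t ^ α * T := by
    have e : t * N = t ^ α * (t ^ (1 - α) * N) := by
      rw [← mul_assoc, ← Real.rpow_add ht0]
      norm_num
    rw [e]
    exact mul_lt_mul_of_pos_left htK (Real.rpow_pos_of_pos ht0 α)
  -- upper bound for the mixed A-term
  have hL : (t * a + (1 - t) * b) ^ α ≤ b ^ α + t * M := by
    have hm : 0 ≤ t * a + (1 - t) * b := by
      have := mul_nonneg ht0.le ha.le
      have := mul_nonneg ht1'.le hb.le
      linarith
    have hgm := Real.geom_mean_le_arith_mean2_weighted hα0.le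
      (show (0:ℝ) ≤ 1 - α by linarith) hm hb.le (show α + (1 - α) = 1 by ring)
    have hbb : b ^ (1 - α) * b ^ (α - 1) = 1 := by
      rw [← Real.rpow_add hb]
      norm_num
    have hba' : 0 ≤ b ^ (α - 1) := Real.rpow_nonneg hb.le _
    have h5 : (t * a + (1 - t) * b) ^ α ≤ (α * (t * a + (1 - t) * b) + (1 - α) * b) * b ^ (α - 1) := by
      have h6 := mul_le_mul_of_nonneg_right hgm hba'
      rw [mul_assoc, hbb, mul_one] at h6
      exact h6
    have h7 : (α * (t * a + (1 - t) * b) + (1 - α) * b) * b ^ (α - 1)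
        ≤ (b + α * t * a) * b ^ (α - 1) := by
      have h7' : α * (t * a + (1 - t) * b) + (1 - α) * b ≤ b + α * t * a := by
        nlinarith [mul_nonneg (mul_nonneg hα0.le ht0.le) hb.le]
      exact mul_le_mul_of_nonneg_right h7' hba'
    have h8 : (b + α * t * a) * b ^ (α - 1) = b ^ α + t * M := by
      have hba : b ^ α = b ^ (α - 1) * b := by
        nth_rewrite 1 [show α = α - 1 + 1 by ring]
        rw [Real.rpow_add hb, Real.rpow_one]
      rw [hM', hba]
      ring
    linarith
  -- combine
  have hfin : (b ^ α + t * M) * c < b ^ α * (t ^ α * s + (1 - t) * c) := by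
    have hexp : b ^ α * (t ^ α * s + (1 - t) * c) - (b ^ α + t * M) * c
        = t ^ α * T - t * N := by
      rw [hT', hN']
      ring
    linarith [htN, hexp]
  have := mul_le_mul_of_nonneg_right hL hc.le
  linarith

lemma dir1_notsubset (hα0 : 0 < α) (hα1 : α < 1) {P Q R : X → ℝ}
    (hP : IsPMF P) (hQ : IsPMF Q) (hR : IsPMF R)
    (hPR : ∀ x, R x = 0 → P x = 0) (hQR : ∀ x, R x = 0 → Q x = 0)
    (x₀ : X) (hq0 : Q x₀ = 0) (hp0 : 0 < P x₀) :
    ∃ t : ℝ, t ∈ Set.Ioc (0:ℝ) 1 ∧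
      Lalpha α (fun x => t * P x + (1 - t) * Q x) R < Lalpha α Q R := by
  classical
  have ha : 0 < ∑ x, P x * R x ^ (α - 1) := A_pos hP hR.1 hPR
  have hb : 0 < ∑ x, Q x * R x ^ (α - 1) := A_pos hQ hR.1 hQR
  have hc : 0 < ∑ x, Q x ^ α := sum_rpow_pos hα0 hQ
  have hs : 0 < P x₀ ^ α := Real.rpow_pos_of_pos hp0 α
  obtain ⟨t, ht0, ht1, hfin⟩ := key_numeric hα0 hα1 ha hb hc hs
  have ht1' : (0:ℝ) < 1 - t ∨ t = 1 := by
    rcases eq_or_lt_of_le ht1 with h | h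
    · right; exact h
    · left; linarith
  have ht1'' : (0:ℝ) ≤ 1 - t := by linarith
  refine ⟨t, ⟨ht0, ht1⟩, ?_⟩
  -- lower bound for the mixed power sum
  have hLow : t ^ α * P x₀ ^ α + (1 - t) * (∑ x, Q x ^ α)
      ≤ ∑ x, (t * P x + (1 - t) * Q x) ^ α := by
    have hsplit : ∑ x, (t * P x + (1 - t) * Q x) ^ α
        = (t * P x₀ + (1 - t) * Q x₀) ^ α
          + ∑ x ∈ Finset.univ.erase x₀, (t * P x + (1 - t) * Q x) ^ α :=
      (Finset.add_sum_erase _ _ (Finset.mem_univ x₀)).symm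
    have hterm0 : (t * P x₀ + (1 - t) * Q x₀) ^ α = t ^ α * P x₀ ^ α := by
      rw [hq0, mul_zero, add_zero, Real.mul_rpow ht0.le hp0.le]
    have hcsplit : ∑ x ∈ Finset.univ.erase x₀, Q x ^ α = ∑ x, Q x ^ α := by
      have h := Finset.add_sum_erase Finset.univ (fun x => Q x ^ α) (Finset.mem_univ x₀)
      rw [hq0, Real.zero_rpow hα0.ne', zero_add] at h
      exact h
    have hrest : (1 - t) * ∑ x, Q x ^ α
        ≤ ∑ x ∈ Finset.univ.erase x₀, (t * P x + (1 - t) * Q x) ^ α := by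
      rw [← hcsplit, Finset.mul_sum]
      refine Finset.sum_le_sum fun x _ => ?_
      have h9 : (1 - t) * Q x ^ α ≤ (1 - t) ^ α * Q x ^ α := by
        have h10 : (1 - t) ≤ (1 - t) ^ α := by
          rcases ht1' with h | h
          · have h12 := Real.rpow_le_rpow_of_exponent_ge h (by linarith) hα1.le
            rwa [Real.rpow_one] at h12
          · rw [h]
            norm_num [Real.zero_rpow hα0.ne']
        nlinarith [Real.rpow_nonneg (hQ.1 x) α]
      have h11 : (1 - t) ^ α * Q x ^ α ≤ (t * P x + (1 - t) * Q x) ^ α := by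
        rw [← Real.mul_rpow ht1'' (hQ.1 x)]
        refine Real.rpow_le_rpow (mul_nonneg ht1'' (hQ.1 x)) ?_ hα0.le
        nlinarith [hP.1 x, mul_nonneg ht0.le (hP.1 x)]
      linarith
    rw [hsplit, hterm0]
    linarith
  -- conclude
  rw [← not_le]
  intro hcon
  have h := (Lalpha_le_iff hα0 hα1 (mix_isPMF hP hQ ht0.le ht1) hQ hR
    (fun x hx => by rw [hPR x hx, hQR x hx]; ring) hQR).mp hcon
  rw [sum_affine] at h
  have hba2 : (0:ℝ) ≤ (∑ x, Q x * R x ^ (α - 1)) ^ α :=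
    Real.rpow_nonneg hb.le α
  have hstep := mul_le_mul_of_nonneg_left hLow hba2
  linarith [h, hstep, hfin]

end Aux

/-- Pythagorean property of `L_α`: with `L_α(P,R), L_α(Q,R)` finite,
the segment from `P` to `Q` avoids the ball `B(R, L_α(Q,R))` iff
`L_α(P,R) ≥ L_α(P,Q) + L_α(Q,R)`; conversely, if additionally `L_α(P,Q)` is
finite and the inequality holds, the segment avoids the ball. -/
theorem Lalpha_pythagorean
    {X : Type*} [Fintype X] [Nonempty X]
    (α : ℝ) (hα : 0 < α ∧ α < 1)
    (P Q R : X → ℝ) (hP : IsPMF P) (hQ : IsPMF Q) (hR : IsPMF R)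
    (hPR : Lext α P R < ⊤) (hQR : Lext α Q R < ⊤) :
    ((∀ lam : ℝ, lam ∈ Set.Icc (0:ℝ) 1 →
        Lext α (fun x => lam * P x + (1 - lam) * Q x) R ≥ Lext α Q R) →
      Lext α P R ≥ Lext α P Q + Lext α Q R)
    ∧ (Lext α P Q < ⊤ →
        Lext α P R ≥ Lext α P Q + Lext α Q R →
        ∀ lam : ℝ, lam ∈ Set.Icc (0:ℝ) 1 →
          Lext α (fun x => lam * P x + (1 - lam) * Q x) R ≥ Lext α Q R) := by
  obtain ⟨hα0, hα1⟩ := hα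
  have hPRs : ∀ x, R x = 0 → P x = 0 := by
    by_contra hcon
    simp only [Lext, if_neg hcon] at hPR
    exact lt_irrefl _ hPR
  have hQRs : ∀ x, R x = 0 → Q x = 0 := by
    by_contra hcon
    simp only [Lext, if_neg hcon] at hQR
    exact lt_irrefl _ hQR
  have hMixs : ∀ (t : ℝ), ∀ x, R x = 0 → t * P x + (1 - t) * Q x = 0 := fun t x hx => by
    rw [hPRs x hx, hQRs x hx]; ring
  constructor
  · intro hseg
    by_cases hPQs : ∀ x, Q x = 0 → P x = 0
    · have hseg' : ∀ t ∈ Set.Ioc (0:ℝ) 1,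
          Lalpha α Q R ≤ Lalpha α (fun x => t * P x + (1 - t) * Q x) R := by
        intro t ht
        have h := hseg t ⟨ht.1.le, ht.2⟩
        simp only [Lext, if_pos (hMixs t), if_pos hQRs, ge_iff_le,
          EReal.coe_le_coe_iff] at h
        exact h
      have hkey := dir1_core hα0 hα1 hP hQ hR hPRs hQRs hPQs hseg'
      simp only [Lext, if_pos hPQs, if_pos hQRs, if_pos hPRs, ge_iff_le, ← EReal.coe_add,
        EReal.coe_le_coe_iff]
      exact (pyth_iff hα0 hα1 hP hQ hR hPRs hQRs hPQs).mpr hkey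
    · exfalso
      push_neg at hPQs
      obtain ⟨x₀, hq0, hp0⟩ := hPQs
      have hp0' : 0 < P x₀ := lt_of_le_of_ne (hP.1 x₀) (Ne.symm hp0)
      obtain ⟨t, ht, hlt⟩ := dir1_notsubset hα0 hα1 hP hQ hR hPRs hQRs x₀ hq0 hp0'
      have h := hseg t ⟨ht.1.le, ht.2⟩
      simp only [Lext, if_pos (hMixs t), if_pos hQRs, ge_iff_le,
        EReal.coe_le_coe_iff] at h
      linarith
  · intro hPQtop hineq t ht
    have hPQs : ∀ x, Q x = 0 → P x = 0 := by
      by_contra hcon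
      simp only [Lext, if_neg hcon] at hPQtop
      exact lt_irrefl _ hPQtop
    simp only [Lext, if_pos hPQs, if_pos hQRs, if_pos hPRs, ge_iff_le, ← EReal.coe_add,
      EReal.coe_le_coe_iff] at hineq
    have hkey := (pyth_iff hα0 hα1 hP hQ hR hPRs hQRs hPQs).mp hineq
    simp only [Lext, if_pos (hMixs t), if_pos hQRs, ge_iff_le, EReal.coe_le_coe_iff]
    rw [Lalpha_le_iff hα0 hα1 (mix_isPMF hP hQ ht.1 ht.2) hQ hR (hMixs t) hQRs]
    exact dir2_core hα0 hα1 hP hQ hR hQRs hPQs ht.1 ht.2 hkey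
end

section
/- Let α ∈ (0,1), E a convex set of PMFs on finite X, R a PMF. If the L_α-projection of R on E exists, it is unique. -/
open Real Finset

section auxUnique
variable {X : Type*} [Fintype X] {α : ℝ}

lemma my_pmf_pos (hα0 : 0 < α) {P : X → ℝ} (hP : IsPMF P) : 0 < ∑ x, P x ^ α := by
  have hex : ∃ x, 0 < P x := by
    by_contra h
    push_neg at h
    have hz : ∀ x, P x = 0 := fun x => le_antisymm (h x) (hP.1 x)
    have := hP.2
    simp [hz] at this
  obtain ⟨x, hx⟩ := hex
  exact Finset.sum_pos' (fun i _ => rpow_nonneg (hP.1 i) α)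
    ⟨x, Finset.mem_univ x, rpow_pos_of_pos hx α⟩

/-- Reverse Hölder / Jensen inequality together with its equality case. -/
lemma my_holder (hα0 : 0 < α) (hα1 : α < 1) (u W : X → ℝ)
    (hu : ∀ x, 0 ≤ u x) (hW : ∀ x, 0 ≤ W x) (hsupp : ∀ x, W x = 0 → u x = 0)
    (hS : 0 < ∑ a, W a ^ α) :
    (∑ x, u x ^ α) ^ α⁻¹ ≤ (∑ x, u x * (W x ^ α / ∑ a, W a ^ α) ^ ((α - 1) / α)) ∧
    ((∑ x, u x ^ α) ^ α⁻¹ = (∑ x, u x * (W x ^ α / ∑ a, W a ^ α) ^ ((α - 1) / α)) →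
      ∃ c : ℝ, ∀ x, u x = c * W x) := by
  set S := ∑ a, W a ^ α with hSdef
  set lam : X → ℝ := fun x => W x ^ α / S with hlam
  set p : X → ℝ := fun x => u x * lam x ^ (-α⁻¹) with hp
  have hlamnn : ∀ x, 0 ≤ lam x := fun x => div_nonneg (rpow_nonneg (hW x) α) hS.le
  have hlam0 : ∀ x, W x = 0 → lam x = 0 := by
    intro x hx; simp [hlam, hx, Real.zero_rpow hα0.ne']
  have hlampos : ∀ x, W x ≠ 0 → 0 < lam x := by
    intro x hx
    exact div_pos (rpow_pos_of_pos (lt_of_le_of_ne (hW x) (Ne.symm hx)) α) hS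
  have hpnn : ∀ x, 0 ≤ p x := fun x => mul_nonneg (hu x) (rpow_nonneg (hlamnn x) _)
  have hsum1 : ∑ x, lam x = 1 := by
    rw [hlam]; rw [← Finset.sum_div]; exact div_self hS.ne'
  have key1 : ∀ x, lam x • (p x ^ α) = u x ^ α := by
    intro x
    rcases eq_or_ne (W x) 0 with hx | hx
    · simp [hlam0 x hx, hsupp x hx, Real.zero_rpow hα0.ne']
    · have hl := hlampos x hx
      rw [hp, smul_eq_mul, Real.mul_rpow (hu x) (rpow_nonneg (hlamnn x) _),
        ← Real.rpow_mul (hlamnn x), neg_mul, inv_mul_cancel₀ hα0.ne', Real.rpow_neg_one]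
      field_simp
  have key2 : ∀ x, lam x • p x = u x * lam x ^ ((α - 1) / α) := by
    intro x
    rcases eq_or_ne (W x) 0 with hx | hx
    · simp [hlam0 x hx, hsupp x hx]
    · have hl := hlampos x hx
      rw [hp, smul_eq_mul]
      rw [show lam x * (u x * lam x ^ (-α⁻¹)) = u x * (lam x ^ (1:ℝ) * lam x ^ (-α⁻¹)) by
        rw [Real.rpow_one]; ring]
      rw [← Real.rpow_add hl]
      congr 2
      field_simp; ring
  set F := ∑ x, u x * lam x ^ ((α - 1) / α) with hF
  have hFsum : ∑ x, lam x • p x = F := by rw [hF]; exact Finset.sum_congr rfl fun x _ => key2 x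
  have hBsum : ∑ x, lam x • (p x ^ α) = ∑ x, u x ^ α :=
    Finset.sum_congr rfl fun x _ => key1 x
  have hFnn : 0 ≤ F := by
    rw [← hFsum]; exact Finset.sum_nonneg fun x _ => smul_nonneg (hlamnn x) (hpnn x)
  have jensen : ∑ x, u x ^ α ≤ F ^ α := by
    rw [← hBsum, ← hFsum]
    exact ConcaveOn.le_map_sum (Real.concaveOn_rpow hα0.le hα1.le)
      (fun i _ => hlamnn i) hsum1 (fun i _ => hpnn i)
  have hBnn : 0 ≤ ∑ x, u x ^ α := Finset.sum_nonneg fun x _ => rpow_nonneg (hu x) α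
  have hineq : (∑ x, u x ^ α) ^ α⁻¹ ≤ F := by
    calc (∑ x, u x ^ α) ^ α⁻¹ ≤ (F ^ α) ^ α⁻¹ :=
          Real.rpow_le_rpow hBnn jensen (by positivity)
      _ = F := by
          rw [← Real.rpow_mul hFnn, mul_inv_cancel₀ hα0.ne', Real.rpow_one]
  refine ⟨hineq, fun heq => ?_⟩
  have hBF : F ^ α ≤ ∑ x, u x ^ α := by
    have : (F : ℝ) ^ α = ((∑ x, u x ^ α) ^ α⁻¹) ^ α := by rw [heq]
    rw [this, ← Real.rpow_mul hBnn, inv_mul_cancel₀ hα0.ne', Real.rpow_one]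
  set t : Finset X := Finset.univ.filter (fun x => W x ≠ 0) with ht
  have hout : ∀ x, x ∉ t → W x = 0 := by
    intro x hx
    rw [ht] at hx
    simpa using hx
  have hrestrict : ∀ g : X → ℝ, ∑ x ∈ t, lam x • g x = ∑ x, lam x • g x := by
    intro g
    refine Finset.sum_subset (Finset.subset_univ t) ?_
    intro x _ hxt
    simp [hlam0 x (hout x hxt)]
  have hsum1t : ∑ x ∈ t, lam x = 1 := by
    rw [← hsum1]
    refine Finset.sum_subset (Finset.subset_univ t) ?_
    intro x _ hxt
    exact hlam0 x (hout x hxt)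
  have h_eq : (∑ x ∈ t, lam x • p x) ^ α ≤ ∑ x ∈ t, lam x • (p x ^ α) := by
    rw [hrestrict p, hrestrict (fun x => p x ^ α), hFsum, hBsum]
    exact hBF
  have heqcase := StrictConcaveOn.eq_of_map_sum_eq (Real.strictConcaveOn_rpow hα0 hα1)
    (fun x hx => hlampos x (by rw [ht] at hx; simpa using hx))
    hsum1t (fun x _ => hpnn x) h_eq
  rcases t.eq_empty_or_nonempty with hemp | ⟨j, hj⟩
  · exact ⟨0, fun x => by rw [hsupp x (hout x (hemp ▸ Finset.notMem_empty x)), zero_mul]⟩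
  · refine ⟨p j / S ^ α⁻¹, fun x => ?_⟩
    rcases eq_or_ne (W x) 0 with hx | hx
    · rw [hsupp x hx, hx, mul_zero]
    · have hxt : x ∈ t := by rw [ht]; simp [hx]
      have hl := hlampos x hx
      have hux : u x = p x * lam x ^ α⁻¹ := by
        rw [hp]
        rw [show u x * lam x ^ (-α⁻¹) * lam x ^ α⁻¹
            = u x * (lam x ^ (-α⁻¹) * lam x ^ α⁻¹) by ring]
        rw [← Real.rpow_add hl, neg_add_cancel, Real.rpow_zero, mul_one]
      have hlx : lam x ^ α⁻¹ = W x / S ^ α⁻¹ := by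
        rw [hlam]
        rw [Real.div_rpow (rpow_nonneg (hW x) α) hS.le, ← Real.rpow_mul (hW x),
          mul_inv_cancel₀ hα0.ne', Real.rpow_one]
      rw [hux, heqcase hxt hj, hlx]
      ring

/-- The value of the Hölder functional on `W` itself. -/
lemma my_FW (hα0 : 0 < α) (hα1 : α < 1) (W : X → ℝ) (hW : ∀ x, 0 ≤ W x)
    (hS : 0 < ∑ a, W a ^ α) :
    ∑ x, W x * (W x ^ α / ∑ a, W a ^ α) ^ ((α - 1) / α) = (∑ a, W a ^ α) ^ α⁻¹ := by
  set S := ∑ a, W a ^ α with hSdef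
  have key : ∀ x, W x * (W x ^ α / S) ^ ((α - 1) / α) = W x ^ α * S ^ ((1 - α) / α) := by
    intro x
    rcases eq_or_ne (W x) 0 with hx | hx
    · rw [hx, Real.zero_rpow hα0.ne', zero_div,
        Real.zero_rpow (div_ne_zero (sub_ne_zero_of_ne hα1.ne) hα0.ne')]
      simp
    · have hWx : 0 < W x := lt_of_le_of_ne (hW x) (Ne.symm hx)
      rw [Real.div_rpow (rpow_nonneg (hW x) α) hS.le, ← Real.rpow_mul (hW x)]
      rw [show α * ((α - 1) / α) = α - 1 by field_simp]
      rw [show W x * (W x ^ (α - 1) / S ^ ((α - 1) / α))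
          = W x ^ (1:ℝ) * W x ^ (α - 1) * (S ^ ((α - 1) / α))⁻¹ by rw [Real.rpow_one]; ring]
      rw [← Real.rpow_add hWx]
      rw [show (1:ℝ) + (α - 1) = α by ring]
      rw [← Real.rpow_neg hS.le]
      rw [show -((α - 1) / α) = (1 - α) / α by ring]
  rw [Finset.sum_congr rfl fun x _ => key x, ← Finset.sum_mul, ← hSdef,
    show S * S ^ ((1 - α) / α) = S ^ (1:ℝ) * S ^ ((1 - α) / α) by rw [Real.rpow_one],
    ← Real.rpow_add hS, show (1:ℝ) + (1 - α) / α = α⁻¹ by field_simp; ring]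

/-- Closed form for `Lalpha` when the support condition holds. -/
lemma my_Lalpha_eq (hα0 : 0 < α) (hα1 : α < 1) (P R : X → ℝ) (hP : IsPMF P) (hR : IsPMF R)
    (hsupp : ∀ x, R x = 0 → P x = 0) :
    Lalpha α P R = Real.log (∑ a, R a ^ α)
      + (α * Real.log (∑ x, P x * R x ^ (α - 1)) - Real.log (∑ x, P x ^ α)) / (1 - α) := by
  have h1α : (0:ℝ) < 1 - α := by linarith
  set S := ∑ a, R a ^ α with hSdef
  have hS : 0 < S := my_pmf_pos hα0 hR
  set A := ∑ x, P x * R x ^ (α - 1) with hAdef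
  set B := ∑ x, P x ^ α with hBdef
  have hB : 0 < B := my_pmf_pos hα0 hP
  have hA : 0 < A := by
    have hex : ∃ x, 0 < P x := by
      by_contra h
      push_neg at h
      have hz : ∀ x, P x = 0 := fun x => le_antisymm (h x) (hP.1 x)
      have := hP.2; simp [hz] at this
    obtain ⟨x, hx⟩ := hex
    have hRx : 0 < R x := by
      rcases lt_or_eq_of_le (hR.1 x) with h | h
      · exact h
      · exact absurd (hsupp x h.symm) hx.ne'
    refine Finset.sum_pos' (fun i _ => mul_nonneg (hP.1 i) (rpow_nonneg (hR.1 i) _))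
      ⟨x, Finset.mem_univ x, mul_pos hx (rpow_pos_of_pos hRx _)⟩
  have key : ∀ x, P x * (∑ a, (R a / R x) ^ α) ^ ((1 - α) / α)
      = S ^ ((1 - α) / α) * (P x * R x ^ (α - 1)) := by
    intro x
    rcases eq_or_ne (R x) 0 with hx | hx
    · rw [hsupp x hx]; ring
    · have hRx : 0 < R x := lt_of_le_of_ne (hR.1 x) (Ne.symm hx)
      have hinner : ∑ a, (R a / R x) ^ α = S / R x ^ α := by
        rw [hSdef, Finset.sum_div]
        exact Finset.sum_congr rfl fun a _ => Real.div_rpow (hR.1 a) (hR.1 x) α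
      rw [hinner, Real.div_rpow hS.le (rpow_nonneg (hR.1 x) α), ← Real.rpow_mul (hR.1 x),
        show α * ((1 - α) / α) = 1 - α by field_simp,
        show R x ^ (α - 1) = (R x ^ (1 - α))⁻¹ by
          rw [← Real.rpow_neg (hR.1 x), show -(1 - α) = α - 1 by ring]]
      field_simp
  have hsum : ∑ x, P x * (∑ a, (R a / R x) ^ α) ^ ((1 - α) / α) = S ^ ((1 - α) / α) * A := by
    rw [Finset.sum_congr rfl fun x _ => key x, ← Finset.mul_sum]
  rw [Lalpha, renyiH, hsum, Real.log_mul (by positivity) hA.ne', Real.log_rpow hS]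
  have h1 : (1 - α) ≠ 0 := h1α.ne'
  field_simp
  ring

end auxUnique

/-- uniqueness of the `L_α`-projection: if `Q₁` and `Q₂` are both
`L_α`-projections of `R` on a convex set `E` of PMFs (finite minimizers of
`L_α(·,R)` over `E`), then `Q₁ = Q₂`. -/
theorem Lalpha_projection_unique
    {X : Type*} [Fintype X] [Nonempty X]
    (α : ℝ) (hα : 0 < α ∧ α < 1)
    (E : Set (X → ℝ)) (hEconvex : Convex ℝ E) (hEpmf : ∀ P ∈ E, IsPMF P)
    (R : X → ℝ) (hR : IsPMF R)
    (Q₁ Q₂ : X → ℝ) (hQ₁ : Q₁ ∈ E) (hQ₂ : Q₂ ∈ E)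
    (hfin₁ : Lext α Q₁ R < ⊤) (hfin₂ : Lext α Q₂ R < ⊤)
    (hmin₁ : ∀ P ∈ E, Lext α Q₁ R ≤ Lext α P R)
    (hmin₂ : ∀ P ∈ E, Lext α Q₂ R ≤ Lext α P R) :
    Q₁ = Q₂ := by
  classical
  obtain ⟨hα0, hα1⟩ := hα
  have h1α : (0:ℝ) < 1 - α := by linarith
  have hP₁ : IsPMF Q₁ := hEpmf Q₁ hQ₁
  have hP₂ : IsPMF Q₂ := hEpmf Q₂ hQ₂
  -- support conditions
  have hs₁ : ∀ x, R x = 0 → Q₁ x = 0 := by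
    by_contra h
    rw [Lext, if_neg h] at hfin₁
    exact absurd hfin₁ (lt_irrefl _)
  have hs₂ : ∀ x, R x = 0 → Q₂ x = 0 := by
    by_contra h
    rw [Lext, if_neg h] at hfin₂
    exact absurd hfin₂ (lt_irrefl _)
  -- the midpoint
  set M : X → ℝ := fun x => (Q₁ x + Q₂ x) / 2 with hMdef
  have hM : M ∈ E := by
    have h := hEconvex hQ₁ hQ₂ (by norm_num : (0:ℝ) ≤ 1/2) (by norm_num : (0:ℝ) ≤ 1/2)
      (by norm_num : (1:ℝ)/2 + 1/2 = 1)
    convert h using 1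
    funext x
    simp only [Pi.add_apply, Pi.smul_apply, smul_eq_mul, hMdef]
    ring
  have hPM : IsPMF M := hEpmf M hM
  have hsM : ∀ x, R x = 0 → M x = 0 := by
    intro x hx
    simp [hMdef, hs₁ x hx, hs₂ x hx]
  -- unfold Lext
  have e₁ : Lext α Q₁ R = ((Lalpha α Q₁ R : ℝ) : EReal) := by rw [Lext, if_pos hs₁]
  have e₂ : Lext α Q₂ R = ((Lalpha α Q₂ R : ℝ) : EReal) := by rw [Lext, if_pos hs₂]
  have eM : Lext α M R = ((Lalpha α M R : ℝ) : EReal) := by rw [Lext, if_pos hsM]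
  have hm12 : Lalpha α Q₁ R = Lalpha α Q₂ R := by
    have a := hmin₁ Q₂ hQ₂
    have b := hmin₂ Q₁ hQ₁
    rw [e₁, e₂] at a b
    exact le_antisymm (by exact_mod_cast a) (by exact_mod_cast b)
  have hmM : Lalpha α Q₁ R ≤ Lalpha α M R := by
    have a := hmin₁ M hM
    rw [e₁, eM] at a
    exact_mod_cast a
  -- rewrite via the closed form
  rw [my_Lalpha_eq hα0 hα1 Q₁ R hP₁ hR hs₁, my_Lalpha_eq hα0 hα1 Q₂ R hP₂ hR hs₂] at hm12
  rw [my_Lalpha_eq hα0 hα1 Q₁ R hP₁ hR hs₁, my_Lalpha_eq hα0 hα1 M R hPM hR hsM] at hmM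
  set A₁ := ∑ x, Q₁ x * R x ^ (α - 1) with hA₁
  set A₂ := ∑ x, Q₂ x * R x ^ (α - 1) with hA₂
  set AM := ∑ x, M x * R x ^ (α - 1) with hAM
  set B₁ := ∑ x, Q₁ x ^ α with hB₁
  set B₂ := ∑ x, Q₂ x ^ α with hB₂
  set BM := ∑ x, M x ^ α with hBM
  have hB₁p : 0 < B₁ := my_pmf_pos hα0 hP₁
  have hB₂p : 0 < B₂ := my_pmf_pos hα0 hP₂
  have hBMp : 0 < BM := my_pmf_pos hα0 hPM
  have hApos : ∀ (P : X → ℝ), IsPMF P → (∀ x, R x = 0 → P x = 0) →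
      0 < ∑ x, P x * R x ^ (α - 1) := by
    intro P hP hsupp
    have hex : ∃ x, 0 < P x := by
      by_contra h
      push_neg at h
      have hz : ∀ x, P x = 0 := fun x => le_antisymm (h x) (hP.1 x)
      have := hP.2; simp [hz] at this
    obtain ⟨x, hx⟩ := hex
    have hRx : 0 < R x := by
      rcases lt_or_eq_of_le (hR.1 x) with h | h
      · exact h
      · exact absurd (hsupp x h.symm) hx.ne'
    exact Finset.sum_pos' (fun i _ => mul_nonneg (hP.1 i) (rpow_nonneg (hR.1 i) _))
      ⟨x, Finset.mem_univ x, mul_pos hx (rpow_pos_of_pos hRx _)⟩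
  have hA₁p : 0 < A₁ := hApos Q₁ hP₁ hs₁
  have hA₂p : 0 < A₂ := hApos Q₂ hP₂ hs₂
  have hAMp : 0 < AM := hApos M hPM hsM
  -- translate into ratios with N = B ^ α⁻¹
  set N₁ := B₁ ^ α⁻¹ with hN₁
  set N₂ := B₂ ^ α⁻¹ with hN₂
  set NM := BM ^ α⁻¹ with hNM
  have hN₁p : 0 < N₁ := rpow_pos_of_pos hB₁p _
  have hN₂p : 0 < N₂ := rpow_pos_of_pos hB₂p _
  have hNMp : 0 < NM := rpow_pos_of_pos hBMp _
  have ratio : ∀ A B : ℝ, 0 < A → 0 < B →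
      α * Real.log A - Real.log B = α * Real.log (A / B ^ α⁻¹) := by
    intro A B hA hB
    rw [Real.log_div hA.ne' (rpow_pos_of_pos hB _).ne', Real.log_rpow hB]
    field_simp
  have hm12' : A₁ / N₁ = A₂ / N₂ := by
    have h := hm12
    have h' : α * Real.log A₁ - Real.log B₁ = α * Real.log A₂ - Real.log B₂ := by
      field_simp at h
      linarith
    rw [ratio A₁ B₁ hA₁p hB₁p, ratio A₂ B₂ hA₂p hB₂p] at h'
    have hlog : Real.log (A₁ / N₁) = Real.log (A₂ / N₂) := by
      have := mul_left_cancel₀ hα0.ne' h'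
      exact this
    exact Real.log_injOn_pos (Set.mem_Ioi.mpr (div_pos hA₁p hN₁p))
      (Set.mem_Ioi.mpr (div_pos hA₂p hN₂p)) hlog
  have hmM' : A₁ / N₁ ≤ AM / NM := by
    have h := hmM
    have h' : α * Real.log A₁ - Real.log B₁ ≤ α * Real.log AM - Real.log BM := by
      have h2 := sub_le_sub_right h (Real.log (∑ a, R a ^ α))
      simp only [add_sub_cancel_left] at h2
      exact (div_le_div_iff_of_pos_right h1α).mp h2
    rw [ratio A₁ B₁ hA₁p hB₁p, ratio AM BM hAMp hBMp] at h'
    have hlog := le_of_mul_le_mul_left (by linarith [h'] : α * Real.log (A₁ / N₁) ≤ α * Real.log (AM / NM)) hα0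
    exact (Real.log_le_log_iff (div_pos hA₁p hN₁p) (div_pos hAMp hNMp)).mp hlog
  -- derive N M ≤ (N₁ + N₂)/2
  set r := A₁ / N₁ with hr
  have hrp : 0 < r := div_pos hA₁p hN₁p
  have hA₁r : A₁ = r * N₁ := by rw [hr]; field_simp
  have hA₂r : A₂ = r * N₂ := by rw [hm12']; field_simp
  have hAMhalf : AM = (A₁ + A₂) / 2 := by
    rw [hAM, hA₁, hA₂, hMdef, ← Finset.sum_add_distrib, Finset.sum_div]
    exact Finset.sum_congr rfl fun x _ => by ring
  have h2 : r * NM ≤ AM := by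
    have : r ≤ AM / NM := hmM'
    exact (le_div_iff₀ hNMp).mp this
  have h3 : r * NM ≤ r * ((N₁ + N₂) / 2) := by
    rw [hAMhalf, hA₁r, hA₂r] at h2
    linarith
  have hNMle : NM ≤ (N₁ + N₂) / 2 := le_of_mul_le_mul_left h3 hrp
  -- Hölder on W = Q₁ + Q₂
  set W : X → ℝ := fun x => Q₁ x + Q₂ x with hWdef
  have hWnn : ∀ x, 0 ≤ W x := fun x => add_nonneg (hP₁.1 x) (hP₂.1 x)
  have hWsupp₁ : ∀ x, W x = 0 → Q₁ x = 0 := by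
    intro x hx
    have h1 := hP₁.1 x
    have h2 := hP₂.1 x
    simp only [hWdef] at hx
    linarith
  have hWsupp₂ : ∀ x, W x = 0 → Q₂ x = 0 := by
    intro x hx
    have h1 := hP₁.1 x
    have h2 := hP₂.1 x
    simp only [hWdef] at hx
    linarith
  have hSW : ∑ a, W a ^ α = (2:ℝ) ^ α * BM := by
    rw [hBM, Finset.mul_sum]
    refine Finset.sum_congr rfl fun x _ => ?_
    rw [← Real.mul_rpow (by norm_num) (hPM.1 x)]
    congr 1
    simp only [hWdef, hMdef]
    ring
  have hSWp : 0 < ∑ a, W a ^ α := by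
    rw [hSW]
    exact mul_pos (rpow_pos_of_pos (by norm_num) α) hBMp
  have hNW : (∑ a, W a ^ α) ^ α⁻¹ = 2 * NM := by
    rw [hSW, Real.mul_rpow (rpow_nonneg (by norm_num) α) hBMp.le,
      ← Real.rpow_mul (by norm_num : (0:ℝ) ≤ 2), mul_inv_cancel₀ hα0.ne', Real.rpow_one, hNM]
  have hold₁ := my_holder hα0 hα1 Q₁ W hP₁.1 hWnn hWsupp₁ hSWp
  have hold₂ := my_holder hα0 hα1 Q₂ W hP₂.1 hWnn hWsupp₂ hSWp
  have hsplit : ∑ x, W x * (W x ^ α / ∑ a, W a ^ α) ^ ((α - 1) / α)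
      = (∑ x, Q₁ x * (W x ^ α / ∑ a, W a ^ α) ^ ((α - 1) / α))
        + ∑ x, Q₂ x * (W x ^ α / ∑ a, W a ^ α) ^ ((α - 1) / α) := by
    rw [← Finset.sum_add_distrib]
    refine Finset.sum_congr rfl fun x _ => ?_
    simp only [hWdef]
    ring
  have hFW := my_FW hα0 hα1 W hWnn hSWp
  have hsum2 : (∑ x, Q₁ x * (W x ^ α / ∑ a, W a ^ α) ^ ((α - 1) / α))
      + (∑ x, Q₂ x * (W x ^ α / ∑ a, W a ^ α) ^ ((α - 1) / α)) = 2 * NM := by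
    rw [← hsplit, hFW, hNW]
  have heq₁ : (∑ x, Q₁ x ^ α) ^ α⁻¹
      = ∑ x, Q₁ x * (W x ^ α / ∑ a, W a ^ α) ^ ((α - 1) / α) := by
    have l₁ := hold₁.1
    have l₂ := hold₂.1
    rw [← hB₁, ← hN₁] at l₁ ⊢
    rw [← hB₂, ← hN₂] at l₂
    linarith
  obtain ⟨c, hc⟩ := hold₁.2 heq₁
  have hcval : c = 1/2 := by
    have hsum : ∑ x, Q₁ x = c * ∑ x, W x := by
      rw [Finset.mul_sum]
      exact Finset.sum_congr rfl fun x _ => hc x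
    have hWsum : ∑ x, W x = 2 := by
      simp only [hWdef]
      rw [Finset.sum_add_distrib, hP₁.2, hP₂.2]
      norm_num
    rw [hP₁.2, hWsum] at hsum
    linarith
  funext x
  have := hc x
  rw [hcval] at this
  simp only [hWdef] at this
  linarith
end
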